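/- arXiv:2204.04209 — 6 statements merged into one kernel-verified Lean document; each statement's English description precedes it below -/
import Mathlib

section
/- Let r and ω be positive integers, let a ∈ ℝ and b ∈ ℝ^r, and let p : ℝ^r → ℝ be a homogeneous polynomial of degree ω whose vector of monomial coefficients has Euclidean norm 1 (i.e., writing p(x) = Σ_{|α|=ω} c_α x^α, one has Σ_α c_α² = 1). Then Var_{g∼N(0,I_r)}[p(a·g + b)] ≥ a^{2ω} / ω^{ω/2}, where Var[X] = E[X²] − (E[X])². -/
/-!
Write `F(g) = p(a g + b)` and let `H_α(x) = ∏ᵢ H_{αᵢ}(xᵢ)` be the multivariate Hermite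
polynomials. Gaussian integration by parts, `(Hₙ φ)' = -Hₙ₊₁ φ` for the standard density `φ`,
gives `E[P(g) Hₙ(g)] = E[P⁽ⁿ⁾(g)]` for every polynomial `P`. Hence the `H_α` are orthogonal
with `E[H_α²] = α!`, and for `|α| = ω` the pairing `E[F H_α]` only sees the degree-`ω` part of
`F`, which is `a^ω p(g)`, so it equals `a^ω α! c_α`. For `Y = ∑ c_α H_α` and
`W = ∑ c_α² α! ≥ 1` this gives `Var Y = W` and `Cov(F, Y) = a^ω W`, and `0 ≤ Var(F - a^ω Y)`
yields `Var F ≥ a^{2ω} W ≥ a^{2ω}`, which is stronger than the claim.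
-/

open MeasureTheory ProbabilityTheory

/-- The standard Gaussian measure `N(0, I_r)` on `ℝ^r`, i.e. the product of `r`
copies of the standard one-dimensional Gaussian. -/
noncomputable def gaussianPi (r : ℕ) : Measure (Fin r → ℝ) :=
  Measure.pi fun _ => gaussianReal 0 1

open Polynomial Real
open scoped NNReal ENNReal Nat

instance ENNReal.HolderTriple.instTwoMul (p : ℝ≥0∞) : ENNReal.HolderTriple (2 * p) (2 * p) p where
  inv_add_inv_eq_inv := by
    rw [← two_mul, ENNReal.mul_inv (by simp) (by simp), ← mul_assoc,
      ENNReal.mul_inv_cancel two_ne_zero ENNReal.ofNat_ne_top, one_mul]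

lemma Finsupp.exists_lt_of_degree_eq_of_ne {σ : Type*} {δ α : σ →₀ ℕ}
    (hdeg : δ.degree = α.degree) (hne : δ ≠ α) : ∃ i, δ i < α i := by
  by_contra! hle
  obtain ⟨e, rfl⟩ := le_iff_exists_add.1 (show α ≤ δ from hle)
  have he : e.degree = 0 := by rw [map_add] at hdeg; omega
  simp [(degree_eq_zero_iff e).1 he] at hne

lemma MvPolynomial.ne_zero_of_mem_support {σ R : Type*} [CommSemiring R] {p : MvPolynomial σ R}
    (hp0 : p.coeff 0 = 0) {α : σ →₀ ℕ} (hα : α ∈ p.support) : α ≠ 0 := by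
  rintro rfl
  exact MvPolynomial.mem_support_iff.1 hα hp0

namespace MeasureTheory

variable {Ω : Type*} [MeasurableSpace Ω]

noncomputable def finiteMoments (μ : Measure Ω) [IsFiniteMeasure μ] : Subalgebra ℝ (Ω → ℝ) where
  carrier := {f | ∀ p : ℝ≥0, MemLp f p μ}
  mul_mem' {f g} hf hg p := by
    have hf' := hf (2 * p)
    have hg' := hg (2 * p)
    rw [ENNReal.coe_mul, ENNReal.coe_ofNat] at hf' hg'
    exact hg'.mul hf'
  add_mem' hf hg p := (hf p).add (hg p)
  algebraMap_mem' c _ := memLp_const c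

variable {μ : Measure Ω} [IsFiniteMeasure μ]

lemma memLp_two_of_mem_finiteMoments {f : Ω → ℝ} (hf : f ∈ finiteMoments μ) : MemLp f 2 μ :=
  hf 2

lemma integrable_of_mem_finiteMoments {f : Ω → ℝ} (hf : f ∈ finiteMoments μ) : Integrable f μ :=
  memLp_one_iff_integrable.1 (hf 1)

lemma _root_.Polynomial.eval_comp_mem_finiteMoments {f : Ω → ℝ} (hf : f ∈ finiteMoments μ)
    (P : ℝ[X]) : (fun ω => P.eval (f ω)) ∈ finiteMoments μ := by
  induction P using Polynomial.induction_on' with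
  | add P Q hP hQ => simp only [eval_add]; exact add_mem hP hQ
  | monomial n c =>
    simp only [eval_monomial]; exact mul_mem (algebraMap_mem (finiteMoments μ) c) (pow_mem hf n)

lemma _root_.MvPolynomial.eval_comp_mem_finiteMoments {ι : Type*} {f : ι → Ω → ℝ}
    (hf : ∀ i, f i ∈ finiteMoments μ) (q : MvPolynomial ι ℝ) :
    (fun ω => MvPolynomial.eval (fun i => f i ω) q) ∈ finiteMoments μ := by
  induction q using MvPolynomial.induction_on with
  | C c => simp only [MvPolynomial.eval_C]; exact algebraMap_mem _ c
  | add q q' hq hq' => simp only [map_add]; exact add_mem hq hq'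
  | mul_X q i hq => simp only [map_mul, MvPolynomial.eval_X]; exact mul_mem hq (hf i)

variable {ι : Type*} [Fintype ι] {E : ι → Type*} [∀ i, MeasurableSpace (E i)]
  {ν : ∀ i, Measure (E i)} [∀ i, IsProbabilityMeasure (ν i)]

lemma comp_eval_mem_finiteMoments_pi {i : ι} {f : E i → ℝ} (hf : f ∈ finiteMoments (ν i)) :
    (fun x => f (x i)) ∈ finiteMoments (Measure.pi ν) :=
  fun p => (hf p).comp_measurePreserving (measurePreserving_eval ν i)

lemma prod_comp_eval_mem_finiteMoments_pi {f : ∀ i, E i → ℝ}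
    (hf : ∀ i, f i ∈ finiteMoments (ν i)) :
    (fun x => ∏ i, f i (x i)) ∈ finiteMoments (Measure.pi ν) := by
  have h := prod_mem (t := Finset.univ) fun i _ => comp_eval_mem_finiteMoments_pi (hf i)
  rwa [Finset.prod_fn] at h

end MeasureTheory

namespace Polynomial

noncomputable def hermiteReal (n : ℕ) : ℝ[X] := (hermite n).map (Int.castRingHom ℝ)

lemma hermiteReal_zero : hermiteReal 0 = 1 := by simp [hermiteReal]

lemma hermiteReal_succ (n : ℕ) :
    hermiteReal (n + 1) = X * hermiteReal n - derivative (hermiteReal n) := by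
  simp [hermiteReal, hermite_succ, derivative_map]

lemma natDegree_hermiteReal (n : ℕ) : (hermiteReal n).natDegree = n := by
  rw [hermiteReal, (hermite_monic n).natDegree_map, natDegree_hermite]

lemma coeff_hermiteReal_self (n : ℕ) : (hermiteReal n).coeff n = 1 := by
  simp [hermiteReal, coeff_map]

end Polynomial

namespace ProbabilityTheory

variable {Ω : Type*} [MeasurableSpace Ω] {μ : Measure Ω} [IsFiniteMeasure μ] {X Y : Ω → ℝ}

lemma two_mul_covariance_sub_le_variance (hX : MemLp X 2 μ) (hY : MemLp Y 2 μ) (t : ℝ) :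
    2 * t * cov[X, Y; μ] - t ^ 2 * Var[Y; μ] ≤ Var[X; μ] := by
  have h := variance_nonneg (X - t • Y) μ
  rw [variance_sub hX (hY.const_smul t), covariance_smul_right, variance_smul] at h
  linarith

lemma id_mem_finiteMoments_gaussianReal (m : ℝ) (v : ℝ≥0) :
    (fun x => x) ∈ finiteMoments (gaussianReal m v) :=
  memLp_id_gaussianReal

lemma affine_mem_finiteMoments_gaussianReal {m : ℝ} {v : ℝ≥0} (a c : ℝ) :
    (fun x => a * x + c) ∈ finiteMoments (gaussianReal m v) :=
  add_mem (mul_mem (algebraMap_mem _ a) (id_mem_finiteMoments_gaussianReal m v))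
    (algebraMap_mem _ c)

lemma integrable_eval_gaussianReal (m : ℝ) (v : ℝ≥0) (P : ℝ[X]) :
    Integrable (fun x => P.eval x) (gaussianReal m v) :=
  integrable_of_mem_finiteMoments
    (P.eval_comp_mem_finiteMoments (id_mem_finiteMoments_gaussianReal m v))

lemma integrable_gaussianPDFReal_mul {m : ℝ} {v : ℝ≥0} (hv : v ≠ 0) {f : ℝ → ℝ}
    (hf : Integrable f (gaussianReal m v)) :
    Integrable (fun x => gaussianPDFReal m v x * f x) := by
  rw [gaussianReal_of_var_ne_zero m hv, integrable_withDensity_iff_integrable_smul'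
    (measurable_gaussianPDF m v) (ae_of_all _ fun _ => gaussianPDF_lt_top)] at hf
  simpa [toReal_gaussianPDF] using hf

lemma hasDerivAt_gaussianPDFReal_zero_one (x : ℝ) :
    HasDerivAt (gaussianPDFReal 0 1) (-x * gaussianPDFReal 0 1 x) x := by
  have hpdf : gaussianPDFReal 0 1 = fun y => (√(2 * π))⁻¹ * rexp (-(y ^ 2 / 2)) := by
    ext y; simp [gaussianPDFReal_def, neg_div]
  rw [hpdf]
  refine ((((hasDerivAt_pow 2 x).div_const 2).neg.exp).const_mul (√(2 * π))⁻¹).congr_deriv ?_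
  simp only [Pi.neg_apply]
  push_cast
  ring

local notation "γ" => gaussianReal 0 1

lemma integral_eval_mul_hermiteReal_succ (P : ℝ[X]) (n : ℕ) :
    ∫ x, P.eval x * (hermiteReal (n + 1)).eval x ∂γ
      = ∫ x, (derivative P).eval x * (hermiteReal n).eval x ∂γ := by
  set ρ := gaussianPDFReal 0 1
  have hv (x : ℝ) : HasDerivAt (fun x => ρ x * (hermiteReal n).eval x)
      (-(ρ x * (hermiteReal (n + 1)).eval x)) x := by
    refine ((hasDerivAt_gaussianPDFReal_zero_one x).mul
      ((hermiteReal n).hasDerivAt x)).congr_deriv ?_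
    rw [hermiteReal_succ]
    simp only [eval_sub, eval_mul, eval_X]
    ring
  have hint (Q : ℝ[X]) : Integrable (fun x => ρ x * Q.eval x) :=
    integrable_gaussianPDFReal_mul one_ne_zero (integrable_eval_gaussianReal 0 1 Q)
  have ibp := integral_mul_deriv_eq_deriv_mul_of_integrable (fun x _ => P.hasDerivAt x)
    (fun x _ => hv x)
    ((hint (P * hermiteReal (n + 1))).neg.congr (ae_of_all _ fun x => by simp; ring))
    ((hint (derivative P * hermiteReal n)).congr (ae_of_all _ fun x => by simp; ring))
    ((hint (P * hermiteReal n)).congr (ae_of_all _ fun x => by simp; ring))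
  simp only [integral_gaussianReal_eq_integral_smul one_ne_zero, smul_eq_mul]
  simp only [mul_neg, integral_neg, neg_inj] at ibp
  convert ibp using 1 <;> (congr 1 with x; ring)

lemma integral_eval_mul_hermiteReal (P : ℝ[X]) (n : ℕ) :
    ∫ x, P.eval x * (hermiteReal n).eval x ∂γ = ∫ x, (derivative^[n] P).eval x ∂γ := by
  induction n generalizing P with
  | zero => simp [hermiteReal_zero]
  | succ n ih => rw [integral_eval_mul_hermiteReal_succ, ih, Function.iterate_succ_apply]

lemma integral_eval_mul_hermiteReal_of_natDegree_le {P : ℝ[X]} {n : ℕ} (hP : P.natDegree ≤ n) :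
    ∫ x, P.eval x * (hermiteReal n).eval x ∂γ = n ! * P.coeff n := by
  have hconst : derivative^[n] P = C (n ! * P.coeff n) := by
    rw [eq_C_of_natDegree_le_zero ((natDegree_iterate_derivative P n).trans (by omega)),
      coeff_iterate_derivative, zero_add, Nat.descFactorial_self, nsmul_eq_mul]
  simp [integral_eval_mul_hermiteReal, hconst]

lemma integral_hermiteReal_mul_hermiteReal (m n : ℕ) :
    ∫ x, (hermiteReal m).eval x * (hermiteReal n).eval x ∂γ = if m = n then (n ! : ℝ) else 0 := by
  wlog hmn : m ≤ n generalizing m n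
  · simp_rw [mul_comm ((hermiteReal m).eval _), this n m (by omega), eq_comm (a := n)]
    split_ifs with h <;> simp [h]
  rw [integral_eval_mul_hermiteReal_of_natDegree_le ((natDegree_hermiteReal m).le.trans hmn)]
  split_ifs with h
  · subst h; simp [coeff_hermiteReal_self]
  · rw [coeff_eq_zero_of_natDegree_lt ((natDegree_hermiteReal m).trans_lt (by omega)), mul_zero]

lemma integral_hermiteReal {n : ℕ} (hn : n ≠ 0) : ∫ x, (hermiteReal n).eval x ∂γ = 0 := by
  simpa [hermiteReal_zero, Ne.symm hn] using integral_hermiteReal_mul_hermiteReal 0 n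

lemma integral_affine_pow_mul_hermiteReal_of_lt (a c : ℝ) {m n : ℕ} (hmn : m < n) :
    ∫ x, (a * x + c) ^ m * (hermiteReal n).eval x ∂γ = 0 := by
  have hdeg : ((C a * X + C c) ^ m).natDegree < n :=
    (natDegree_pow_le_of_le m natDegree_linear_le).trans_lt (by omega)
  simpa [coeff_eq_zero_of_natDegree_lt hdeg] using
    integral_eval_mul_hermiteReal_of_natDegree_le hdeg.le

lemma integral_affine_pow_mul_hermiteReal_self (a c : ℝ) (n : ℕ) :
    ∫ x, (a * x + c) ^ n * (hermiteReal n).eval x ∂γ = n ! * a ^ n := by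
  have hlin : (C a * X + C c).natDegree ≤ 1 := natDegree_linear_le
  have hdeg : ((C a * X + C c) ^ n).natDegree ≤ n :=
    (natDegree_pow_le_of_le n hlin).trans (by omega)
  have hcoeff := coeff_pow_of_natDegree_le (m := n) hlin
  simp only [mul_one] at hcoeff
  simpa [hcoeff] using integral_eval_mul_hermiteReal_of_natDegree_le hdeg

section HermiteProd

variable {ι : Type*} [Fintype ι]

local notation "γι" => Measure.pi fun _ : ι => gaussianReal 0 1

noncomputable def hermiteProd (α : ι →₀ ℕ) (x : ι → ℝ) : ℝ :=
  ∏ i, (hermiteReal (α i)).eval (x i)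

lemma hermiteProd_mem_finiteMoments (α : ι →₀ ℕ) : hermiteProd α ∈ finiteMoments γι :=
  prod_comp_eval_mem_finiteMoments_pi fun i =>
    (hermiteReal (α i)).eval_comp_mem_finiteMoments (id_mem_finiteMoments_gaussianReal 0 1)

lemma memLp_hermiteProd (α : ι →₀ ℕ) : MemLp (hermiteProd α) 2 γι :=
  memLp_two_of_mem_finiteMoments (hermiteProd_mem_finiteMoments α)

lemma integral_hermiteProd_mul_hermiteProd (α β : ι →₀ ℕ) :
    ∫ x, hermiteProd α x * hermiteProd β x ∂γι = if α = β then ∏ i, ((α i)! : ℝ) else 0 := by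
  simp only [hermiteProd, ← Finset.prod_mul_distrib]
  rw [integral_fintype_prod_eq_prod
    (fun i x => (hermiteReal (α i)).eval x * (hermiteReal (β i)).eval x)]
  simp only [integral_hermiteReal_mul_hermiteReal]
  split_ifs with h
  · simp [h]
  · obtain ⟨i, hi⟩ : ∃ i, α i ≠ β i := by contrapose! h; exact Finsupp.ext h
    exact Finset.prod_eq_zero (Finset.mem_univ i) (if_neg hi)

lemma integral_hermiteProd {α : ι →₀ ℕ} (hα : α ≠ 0) : ∫ x, hermiteProd α x ∂γι = 0 := by
  obtain ⟨i, hi⟩ : ∃ i, α i ≠ 0 := by contrapose! hα; exact Finsupp.ext hα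
  simp only [hermiteProd]
  rw [integral_fintype_prod_eq_prod (fun i x => (hermiteReal (α i)).eval x)]
  exact Finset.prod_eq_zero (Finset.mem_univ i) (integral_hermiteReal hi)

lemma covariance_hermiteProd_right {F : (ι → ℝ) → ℝ} (hF : MemLp F 2 γι) {α : ι →₀ ℕ}
    (hα : α ≠ 0) : cov[F, hermiteProd α; γι] = ∫ x, F x * hermiteProd α x ∂γι := by
  rw [covariance_eq_sub hF (memLp_hermiteProd α),
    integral_hermiteProd hα, mul_zero, sub_zero]
  rfl

lemma covariance_hermiteProd (α : ι →₀ ℕ) {β : ι →₀ ℕ} (hβ : β ≠ 0) :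
    cov[hermiteProd α, hermiteProd β; γι] = if α = β then ∏ i, ((α i)! : ℝ) else 0 := by
  rw [covariance_hermiteProd_right (memLp_hermiteProd α) hβ, integral_hermiteProd_mul_hermiteProd]

lemma integral_prod_affine_pow_mul_hermiteProd (a : ℝ) (b : ι → ℝ) {δ α : ι →₀ ℕ}
    (hdeg : δ.degree = α.degree) :
    ∫ x, (∏ i, (a * x i + b i) ^ δ i) * hermiteProd α x ∂γι
      = if δ = α then (∏ i, ((α i)! : ℝ)) * a ^ α.degree else 0 := by
  simp only [hermiteProd, ← Finset.prod_mul_distrib]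
  rw [integral_fintype_prod_eq_prod
    (fun i x => (a * x + b i) ^ δ i * (hermiteReal (α i)).eval x)]
  split_ifs with h
  · subst h
    simp only [integral_affine_pow_mul_hermiteReal_self, Finset.prod_mul_distrib,
      Finset.prod_pow_eq_pow_sum, Finsupp.degree_eq_sum]
  · obtain ⟨i, hi⟩ := Finsupp.exists_lt_of_degree_eq_of_ne hdeg h
    exact Finset.prod_eq_zero (Finset.mem_univ i)
      (integral_affine_pow_mul_hermiteReal_of_lt _ _ hi)

lemma integral_eval_affine_mul_hermiteProd (a : ℝ) (b : ι → ℝ) {p : MvPolynomial ι ℝ} {n : ℕ}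
    (hp : p.IsHomogeneous n) {α : ι →₀ ℕ} (hα : α.degree = n) :
    ∫ x, MvPolynomial.eval (fun i => a * x i + b i) p * hermiteProd α x ∂γι
      = p.coeff α * (∏ i, ((α i)! : ℝ)) * a ^ n := by
  have hterm (δ : ι →₀ ℕ) : Integrable
      (fun x => p.coeff δ * ((∏ i, (a * x i + b i) ^ δ i) * hermiteProd α x)) γι :=
    integrable_of_mem_finiteMoments <| mul_mem (algebraMap_mem _ (p.coeff δ)) <|
      mul_mem (prod_comp_eval_mem_finiteMoments_pi fun i =>
        pow_mem (affine_mem_finiteMoments_gaussianReal a (b i)) _) (hermiteProd_mem_finiteMoments α)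
  simp only [MvPolynomial.eval_eq', Finset.sum_mul, mul_assoc]
  rw [integral_finsetSum _ fun δ _ => hterm δ]
  simp only [integral_const_mul]
  rw [Finset.sum_eq_single α]
  · rw [integral_prod_affine_pow_mul_hermiteProd a b rfl, if_pos rfl, hα]
  · intro δ hδ hne
    rw [integral_prod_affine_pow_mul_hermiteProd a b
      ((hp.degree_eq_sum_deg_support hδ).symm.trans hα.symm), if_neg hne, mul_zero]
  · intro hα
    rw [MvPolynomial.notMem_support_iff.1 hα, zero_mul]

noncomputable def hermiteCombination (p : MvPolynomial ι ℝ) (x : ι → ℝ) : ℝ :=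
  ∑ α ∈ p.support, p.coeff α * hermiteProd α x

lemma memLp_hermiteCombination (p : MvPolynomial ι ℝ) : MemLp (hermiteCombination p) 2 γι :=
  memLp_finsetSum _ fun α _ => (memLp_hermiteProd α).const_mul _

lemma memLp_eval_affine (a : ℝ) (b : ι → ℝ) (p : MvPolynomial ι ℝ) :
    MemLp (fun x => MvPolynomial.eval (fun i => a * x i + b i) p) 2 γι :=
  memLp_two_of_mem_finiteMoments <| MvPolynomial.eval_comp_mem_finiteMoments (fun i =>
    comp_eval_mem_finiteMoments_pi (ν := fun _ => gaussianReal 0 1)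
      (affine_mem_finiteMoments_gaussianReal a (b i))) p

lemma variance_hermiteCombination {p : MvPolynomial ι ℝ} (hp0 : p.coeff 0 = 0) :
    Var[hermiteCombination p; γι] = ∑ α ∈ p.support, p.coeff α ^ 2 * ∏ i, ((α i)! : ℝ) := by
  rw [← covariance_self (memLp_hermiteCombination p).aemeasurable]
  unfold hermiteCombination
  rw [covariance_fun_sum_fun_sum' (fun α _ => (memLp_hermiteProd α).const_mul _)
    (fun α _ => (memLp_hermiteProd α).const_mul _)]
  refine Finset.sum_congr rfl fun α hα => ?_
  have hpair {β} (hβ : β ∈ p.support) : cov[fun x => p.coeff α * hermiteProd α x,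
      fun x => p.coeff β * hermiteProd β x; γι]
        = p.coeff α * p.coeff β * if α = β then ∏ i, ((α i)! : ℝ) else 0 := by
    rw [covariance_const_mul_left, covariance_const_mul_right,
      covariance_hermiteProd α (MvPolynomial.ne_zero_of_mem_support hp0 hβ), mul_assoc]
  rw [Finset.sum_eq_single α (fun β hβ hβα => by rw [hpair hβ, if_neg hβα.symm, mul_zero])
    (fun h => absurd hα h), hpair hα, if_pos rfl]
  ring

lemma covariance_eval_affine_hermiteCombination (a : ℝ) (b : ι → ℝ) {p : MvPolynomial ι ℝ}
    {n : ℕ} (hp : p.IsHomogeneous n) (hp0 : p.coeff 0 = 0) :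
    cov[fun x => MvPolynomial.eval (fun i => a * x i + b i) p, hermiteCombination p; γι]
      = a ^ n * ∑ α ∈ p.support, p.coeff α ^ 2 * ∏ i, ((α i)! : ℝ) := by
  unfold hermiteCombination
  rw [covariance_fun_sum_right' (fun α _ => (memLp_hermiteProd α).const_mul _)
    (memLp_eval_affine a b p), Finset.mul_sum]
  refine Finset.sum_congr rfl fun α hα => ?_
  rw [covariance_const_mul_right, covariance_hermiteProd_right (memLp_eval_affine a b p)
    (MvPolynomial.ne_zero_of_mem_support hp0 hα),
    integral_eval_affine_mul_hermiteProd a b hp (hp.degree_eq_sum_deg_support hα).symm]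
  ring

end HermiteProd

end ProbabilityTheory

theorem variance_gaussian_polynomial_shift_general (r ω : ℕ) (hω : 0 < ω)
    (a : ℝ) (b : Fin r → ℝ) (p : MvPolynomial (Fin r) ℝ)
    (hp : p.IsHomogeneous ω)
    (hcoef : ∑ α ∈ p.support, MvPolynomial.coeff α p ^ 2 = 1) :
    a ^ (2 * ω) / (ω : ℝ) ^ ((ω : ℝ) / 2)
      ≤ (∫ g, MvPolynomial.eval (fun i => a * g i + b i) p ^ 2 ∂(gaussianPi r))
          - (∫ g, MvPolynomial.eval (fun i => a * g i + b i) p ∂(gaussianPi r)) ^ 2 := by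
  unfold gaussianPi
  set μ := Measure.pi fun _ : Fin r => gaussianReal 0 1
  set F := fun g : Fin r → ℝ => MvPolynomial.eval (fun i => a * g i + b i) p
  set W := ∑ α ∈ p.support, p.coeff α ^ 2 * ∏ i, ((α i)! : ℝ)
  have hp0 : p.coeff 0 = 0 := hp.coeff_eq_zero (by simpa using hω.ne)
  have hW : 1 ≤ W := hcoef ▸ Finset.sum_le_sum fun α _ =>
    le_mul_of_one_le_right (sq_nonneg _) (Finset.one_le_prod fun i _ => by
      exact_mod_cast (α i).factorial_pos)
  have ha : 0 ≤ a ^ (2 * ω) := (even_two_mul ω).pow_nonneg a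
  calc a ^ (2 * ω) / (ω : ℝ) ^ ((ω : ℝ) / 2)
      ≤ a ^ (2 * ω) := div_le_self ha (one_le_rpow (Nat.one_le_cast.2 hω) (by positivity))
    _ ≤ a ^ (2 * ω) * W := le_mul_of_one_le_right ha hW
    _ = 2 * a ^ ω * cov[F, hermiteCombination p; μ]
          - (a ^ ω) ^ 2 * Var[hermiteCombination p; μ] := by
      rw [covariance_eval_affine_hermiteCombination a b hp hp0, variance_hermiteCombination hp0]
      ring
    _ ≤ Var[F; μ] := two_mul_covariance_sub_le_variance (memLp_eval_affine a b p)
      (memLp_hermiteCombination p) _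
    _ = _ := variance_eq_sub (memLp_eval_affine a b p)

/-- For a homogeneous degree-`ω` polynomial `p` whose coefficient vector has unit
Euclidean norm, and any `a ∈ ℝ`, `b ∈ ℝ^r`,
`Var_{g∼N(0,I_r)}[p(a·g + b)] ≥ a^{2ω} / ω^{ω/2}`. -/
theorem variance_gaussian_polynomial_shift (r ω : ℕ) (hr : 0 < r) (hω : 0 < ω)
    (a : ℝ) (b : Fin r → ℝ) (p : MvPolynomial (Fin r) ℝ)
    (hp : p.IsHomogeneous ω)
    (hcoef : ∑ α ∈ p.support, MvPolynomial.coeff α p ^ 2 = 1) :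
    a ^ (2 * ω) / (ω : ℝ) ^ ((ω : ℝ) / 2)
      ≤ (∫ g, MvPolynomial.eval (fun i => a * g i + b i) p ^ 2 ∂(gaussianPi r))
          - (∫ g, MvPolynomial.eval (fun i => a * g i + b i) p ∂(gaussianPi r)) ^ 2 :=
  variance_gaussian_polynomial_shift_general r ω hω a b p hp hcoef
end

section
/- There is an absolute constant C > 0 with the following property. For all positive integers ω and r and every tuple (j_1, ..., j_ω) ∈ [r]^ω, there exist a positive integer s, unit vectors z_1, ..., z_s ∈ ℝ^r, and a vector w ∈ ℝ^s such that Σ_{i=1}^{s} w_i · z_i^{⊗ω} = (1/ω!) Σ_{π ∈ S_ω} e_{j_{π(1)}} ⊗ ··· ⊗ e_{j_{π(ω)}} and ‖w‖_1 ≤ exp(C · ω² · (log ω + 1)²). -/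
/-!
Polarization. For signs `ε ∈ {±1}^ω` put `v_ε = ∑ᵢ εᵢ uᵢ`. Expanding `v_ε^{⊗ω}` and averaging
against `∏ᵢ εᵢ` kills every term except those indexed by permutations, so
`∑_ε (∏ᵢ εᵢ) v_ε^{⊗ω} = 2^ω ∑_{π ∈ S_ω} u_{π(1)} ⊗ ⋯ ⊗ u_{π(ω)}` (a Glynn-type formula for the
permanent). Normalizing `v_ε = ‖v_ε‖ z_ε` gives a decomposition into `2^ω` unit rank-one tensors
with `‖w‖₁ ≤ (∑ᵢ ‖uᵢ‖)^ω / ω!`, which for `uᵢ = e_{jᵢ}` is `ω^ω / ω! ≤ e^ω`.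
-/

open Finset Function
open scoped Nat

section Polarization

variable {R : Type*} [CommRing R] {α : Type*} [Fintype α] [DecidableEq α]

theorem sum_prod_units_int_pow (m : α → ℕ) :
    ∑ ε : α → ℤˣ, ∏ i, ((ε i : ℤ) : R) ^ m i = ∏ i, (1 + (-1) ^ m i) := by
  rw [← Fintype.prod_sum (fun i (b : ℤˣ) => ((b : ℤ) : R) ^ m i)]
  simp [UnitsInt.univ]

theorem sum_prod_units_int_mul_prod_comp (f : α → α) :
    ∑ ε : α → ℤˣ, (∏ i, ((ε i : ℤ) : R)) * ∏ t, ((ε (f t) : ℤ) : R)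
      = if Bijective f then 2 ^ Fintype.card α else 0 := by
  have hfiber (ε : α → ℤˣ) : (∏ i, ((ε i : ℤ) : R)) * ∏ t, ((ε (f t) : ℤ) : R)
      = ∏ i, ((ε i : ℤ) : R) ^ (Fintype.card {t // f t = i} + 1) := by
    rw [← Fintype.prod_fiberwise' f (fun i => ((ε i : ℤ) : R)), ← prod_mul_distrib]
    simp only [prod_const, card_univ, pow_succ']
  simp only [hfiber, sum_prod_units_int_pow]
  -- the factor `1 + (-1) ^ (c + 1)` is `2` for a fibre of size one and `0` for an empty fibre
  split_ifs with hf
  · have hcard (i : α) : Fintype.card {t // f t = i} = 1 :=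
      Fintype.card_eq_one_iff.2 ⟨⟨_, (hf.2 i).choose_spec⟩, fun ⟨_, ht⟩ =>
        Subtype.ext (hf.1 (ht.trans (hf.2 i).choose_spec.symm))⟩
    simp [hcard, one_add_one_eq_two]
  · obtain ⟨i, hi⟩ := not_forall.1 fun hs => hf (Finite.surjective_iff_bijective.1 hs)
    have : IsEmpty {t // f t = i} := ⟨fun t => hi ⟨t, t.2⟩⟩
    exact prod_eq_zero (mem_univ i) (by simp)

theorem sum_ite_bijective_eq_sum_perm {M : Type*} [AddCommMonoid M] (g : (α → α) → M) :
    ∑ f : α → α, (if Bijective f then g f else 0) = ∑ σ : Equiv.Perm α, g σ := by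
  rw [← sum_filter, sum_subtype _ (fun f => mem_filter_univ f)]
  exact Fintype.sum_equiv Equiv.bijectiveEquiv _ _ fun _ => rfl

theorem Matrix.two_pow_card_mul_permanent_eq_sum (M : Matrix α α R) :
    2 ^ Fintype.card α * M.permanent
      = ∑ ε : α → ℤˣ, (∏ i, ((ε i : ℤ) : R)) * ∏ t, ∑ i, ((ε i : ℤ) : R) * M i t := by
  simp only [Fintype.prod_sum, mul_sum, prod_mul_distrib, ← mul_assoc]
  rw [sum_comm]
  simp only [← sum_mul, sum_prod_units_int_mul_prod_comp, ite_mul, zero_mul,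
    sum_ite_bijective_eq_sum_perm, permanent, mul_sum]

end Polarization

theorem exists_norm_eq_one_and_norm_smul_eq {E : Type*} [NormedAddCommGroup E] [NormedSpace ℝ E]
    [Nontrivial E] (v : E) : ∃ z : E, ‖z‖ = 1 ∧ ‖v‖ • z = v := by
  by_cases hv : v = 0
  · obtain ⟨z, hz⟩ := exists_norm_eq E zero_le_one
    exact ⟨z, hz, by simp [hv]⟩
  · exact ⟨‖v‖⁻¹ • v, norm_smul_inv_norm hv, smul_inv_smul₀ (norm_ne_zero_iff.2 hv) v⟩

theorem exists_unit_tensorPower_sum_eq_symmetrize {κ ι : Type*} [Fintype κ] [DecidableEq κ]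
    [Fintype ι] [Nonempty ι] (u : κ → EuclideanSpace ℝ ι) :
    ∃ (z : (κ → ℤˣ) → EuclideanSpace ℝ ι) (w : (κ → ℤˣ) → ℝ), (∀ ε, ‖z ε‖ = 1) ∧
      (∀ idx : κ → ι, ∑ ε, w ε * ∏ t, z ε (idx t)
        = ((Fintype.card κ)! : ℝ)⁻¹ * ∑ σ : Equiv.Perm κ, ∏ t, u (σ t) (idx t)) ∧
      ∑ ε, |w ε| ≤ (∑ i, ‖u i‖) ^ Fintype.card κ / (Fintype.card κ)! := by
  set n := Fintype.card κ with hn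
  set v : (κ → ℤˣ) → EuclideanSpace ℝ ι := fun ε => ∑ i, ((ε i : ℤ) : ℝ) • u i
  choose z hz using fun ε => exists_norm_eq_one_and_norm_smul_eq (v ε)
  refine ⟨z, fun ε => (∏ i, ((ε i : ℤ) : ℝ)) * ‖v ε‖ ^ n / (2 ^ n * n !),
    fun ε => (hz ε).1, fun idx => ?_, ?_⟩
  · have hv (ε : κ → ℤˣ) : ∏ t, v ε (idx t) = ‖v ε‖ ^ n * ∏ t, z ε (idx t) := by
      conv_lhs => rw [← (hz ε).2]
      simp [prod_mul_distrib, n]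
    have hperm := Matrix.two_pow_card_mul_permanent_eq_sum (Matrix.of fun i t => u i (idx t))
    simp only [Matrix.permanent, Matrix.of_apply, ← hn] at hperm
    calc ∑ ε, (∏ i, ((ε i : ℤ) : ℝ)) * ‖v ε‖ ^ n / (2 ^ n * n !) * ∏ t, z ε (idx t)
        = (2 ^ n * n ! : ℝ)⁻¹ * ∑ ε, (∏ i, ((ε i : ℤ) : ℝ)) * ∏ t, v ε (idx t) := by
          simp only [hv, mul_sum]
          exact sum_congr rfl fun ε _ => by ring
      _ = _ := by
          simp only [v, WithLp.ofLp_sum, WithLp.ofLp_smul, Finset.sum_apply, Pi.smul_apply,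
            smul_eq_mul]
          rw [← hperm]
          field_simp
  · have hnorm (ε : κ → ℤˣ) : ‖v ε‖ ≤ ∑ i, ‖u i‖ :=
      (norm_sum_le _ _).trans_eq (by simp [norm_smul, abs_unit_intCast])
    have hcard : Fintype.card (κ → ℤˣ) = 2 ^ n := by simp [hn]
    have hpos : (0 : ℝ) < 2 ^ n * n ! := by positivity
    calc ∑ ε, |(∏ i, ((ε i : ℤ) : ℝ)) * ‖v ε‖ ^ n / (2 ^ n * n !)|
        = ∑ ε, ‖v ε‖ ^ n / (2 ^ n * n !) := by
          simp [abs_div, abs_prod, abs_unit_intCast, abs_of_pos hpos]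
      _ ≤ ∑ _ε : κ → ℤˣ, (∑ i, ‖u i‖) ^ n / (2 ^ n * n !) := by
          gcongr with ε
          exact hnorm ε
      _ = (∑ i, ‖u i‖) ^ n / n ! := by
          rw [sum_const, card_univ, hcard, nsmul_eq_mul]
          push_cast
          field_simp

theorem natCast_le_sq_mul_log_add_one_sq (n : ℕ) :
    (n : ℝ) ≤ (n : ℝ) ^ 2 * (Real.log n + 1) ^ 2 := by
  have hlog := Real.log_natCast_nonneg n
  calc (n : ℝ) ≤ (n : ℝ) ^ 2 := by exact_mod_cast Nat.le_self_pow two_ne_zero n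
    _ ≤ (n : ℝ) ^ 2 * (Real.log n + 1) ^ 2 :=
      le_mul_of_one_le_right (sq_nonneg _) (one_le_pow₀ (by linarith))

/-- Decomposing symmetric tensors: there is an absolute constant `C > 0` such that
any symmetrized standard basis tensor `(1/ω!) ∑_{π ∈ S_ω} e_{j_{π(1)}} ⊗ ⋯ ⊗ e_{j_{π(ω)}}`
can be written as `∑_i w_i z_i^{⊗ω}` with unit vectors `z_i` and
`‖w‖₁ ≤ exp(C ω² (log ω + 1)²)`. -/
theorem decompose_symmetric_basis_tensor :
    ∃ C : ℝ, 0 < C ∧ ∀ (ω r : ℕ), 0 < ω → 0 < r → ∀ j : Fin ω → Fin r,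
      ∃ (s : ℕ) (z : Fin s → Fin r → ℝ) (w : Fin s → ℝ),
        0 < s ∧
        (∀ i, ∑ k, z i k ^ 2 = 1) ∧
        (∀ idx : Fin ω → Fin r,
          ∑ i, w i * ∏ t, z i (idx t)
            = (1 / (Nat.factorial ω : ℝ)) *
                ∑ π : Equiv.Perm (Fin ω), ∏ t, (if idx t = j (π t) then (1 : ℝ) else 0)) ∧
        ∑ i, |w i| ≤ Real.exp (C * (ω : ℝ) ^ 2 * (Real.log (ω : ℝ) + 1) ^ 2) := by
  refine ⟨1, one_pos, fun ω r _ hr j => ?_⟩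
  have : Nonempty (Fin r) := ⟨⟨0, hr⟩⟩
  obtain ⟨z, w, hz, hzw, hw⟩ :=
    exists_unit_tensorPower_sum_eq_symmetrize fun i => EuclideanSpace.single (j i) (1 : ℝ)
  let e := (Fintype.equivFin (Fin ω → ℤˣ)).symm
  refine ⟨_, fun i => z (e i), fun i => w (e i), Fintype.card_pos, fun i => ?_, fun idx => ?_, ?_⟩
  · rw [← EuclideanSpace.real_norm_sq_eq, hz, one_pow]
  · simpa [PiLp.single_apply] using (e.sum_comp fun ε => w ε * ∏ t, z ε (idx t)).trans (hzw idx)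
  · calc ∑ i, |w (e i)| = ∑ ε, |w ε| := e.sum_comp fun ε => |w ε|
      _ ≤ (ω : ℝ) ^ ω / ω ! := by simpa [PiLp.norm_single] using hw
      _ ≤ Real.exp ω := Real.pow_div_factorial_le_exp _ (Nat.cast_nonneg _) ω
      _ ≤ _ := by simpa using natCast_le_sq_mul_log_add_one_sq ω
end

section
/- There is an absolute constant C > 0 with the following property. Let m be a positive integer, let 0 < ζ ≤ 1, and let a_1, ..., a_m ∈ [0,1] satisfy |a_i − a_j| > ζ for all i ≠ j. Let V be the m×m Vandermonde matrix with V_{ij} = a_i^{j−1}. Then for every w ∈ ℝ^m there exists λ ∈ ℝ^m with λ^T V = w^T and ‖λ‖ ≤ (C/ζ)^{2m−2} · m · ‖w‖. -/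
open Polynomial Finset Matrix

lemma coeff_nodal_bound {ι : Type*} [DecidableEq ι] (s : Finset ι) (v : ι → ℝ)
    (hv : ∀ i ∈ s, |v i| ≤ 1) (k : ℕ) :
    |(Lagrange.nodal s v).coeff k| ≤ 2 ^ s.card := by
  induction s using Finset.cons_induction generalizing k with
  | empty =>
    simp only [Lagrange.nodal_empty, Polynomial.coeff_one, card_empty, pow_zero]
    split <;> simp
  | cons i s hi ih =>
    have hvs : ∀ j ∈ s, |v j| ≤ 1 := fun j hj => hv j (mem_cons_of_mem hj)
    have hvi : |v i| ≤ 1 := hv i (mem_cons_self i s)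
    rw [cons_eq_insert, Lagrange.nodal_insert_eq_nodal hi]
    rw [card_insert_of_notMem hi]
    have key : ((X - C (v i)) * Lagrange.nodal s v).coeff k
        = (X * Lagrange.nodal s v).coeff k - v i * (Lagrange.nodal s v).coeff k := by
      rw [sub_mul, Polynomial.coeff_sub, Polynomial.coeff_C_mul]
    rw [key]
    have h2 : |v i * (Lagrange.nodal s v).coeff k| ≤ 2 ^ s.card := by
      rw [abs_mul]
      calc |v i| * |(Lagrange.nodal s v).coeff k| ≤ 1 * 2 ^ s.card := by
            apply mul_le_mul hvi (ih hvs k) (abs_nonneg _) zero_le_one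
        _ = 2 ^ s.card := one_mul _
    have h1 : |(X * Lagrange.nodal s v).coeff k| ≤ 2 ^ s.card := by
      cases k with
      | zero => simp
      | succ n => rw [Polynomial.coeff_X_mul]; exact ih hvs n
    calc |(X * Lagrange.nodal s v).coeff k - v i * (Lagrange.nodal s v).coeff k|
        ≤ |(X * Lagrange.nodal s v).coeff k| + |v i * (Lagrange.nodal s v).coeff k| :=
          abs_sub _ _
      _ ≤ 2 ^ s.card + 2 ^ s.card := add_le_add h1 h2
      _ = 2 ^ (s.card + 1) := by ring

/-- There is an absolute constant `C > 0` such that for a Vandermonde matrix `V`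
with nodes `a_1, …, a_m ∈ [0,1]` that are pairwise `ζ`-separated, every `w ∈ ℝ^m`
can be written as `w = λᵀ V` with `‖λ‖ ≤ (C/ζ)^{2m−2} m ‖w‖`. -/
theorem vandermonde_interpolate :
    ∃ C : ℝ, 0 < C ∧ ∀ (m : ℕ), 0 < m → ∀ ζ : ℝ, 0 < ζ → ζ ≤ 1 →
      ∀ a : Fin m → ℝ, (∀ i, 0 ≤ a i ∧ a i ≤ 1) →
        (∀ i j, i ≠ j → ζ < |a i - a j|) →
        ∀ w : Fin m → ℝ, ∃ lam : Fin m → ℝ,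
          Matrix.vecMul lam (Matrix.vandermonde a) = w ∧
          Real.sqrt (∑ i, lam i ^ 2)
            ≤ (C / ζ) ^ (2 * m - 2) * m * Real.sqrt (∑ i, w i ^ 2) := by
  refine ⟨2, two_pos, fun m hm ζ hζ hζ1 a ha hsep w => ?_⟩
  have hinj : Function.Injective a := by
    intro i j hij
    by_contra hne
    have := hsep i j hne
    rw [hij, sub_self, abs_zero] at this
    linarith
  have hinjOn : Set.InjOn a ↑(univ : Finset (Fin m)) := fun x _ y _ h => hinj h
  -- the coefficient matrix of the Lagrange basis polynomials
  set M : Matrix (Fin m) (Fin m) ℝ :=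
    fun i k => (Lagrange.basis univ a i).coeff k with hM
  -- M * Vᵀ = 1
  have hdeg : ∀ i : Fin m, (Lagrange.basis univ a i).natDegree < m := by
    intro i
    rw [Lagrange.natDegree_basis hinjOn (mem_univ i), card_univ, Fintype.card_fin]
    omega
  have hMV : M * (Matrix.vandermonde a)ᵀ = 1 := by
    ext i j
    have heval : (Lagrange.basis univ a i).eval (a j)
        = ∑ k : Fin m, (Lagrange.basis univ a i).coeff k * a j ^ (k : ℕ) := by
      rw [Polynomial.eval_eq_sum_range' (lt_of_lt_of_le (hdeg i) (le_refl m))]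
      exact (Fin.sum_univ_eq_sum_range _ m).symm
    by_cases hij : i = j
    · subst hij
      simp only [Matrix.mul_apply, Matrix.transpose_apply, Matrix.vandermonde, Matrix.one_apply_eq,
        Matrix.of_apply]
      rw [← heval, Lagrange.eval_basis_self hinjOn (mem_univ i)]
    · simp only [Matrix.mul_apply, Matrix.transpose_apply, Matrix.vandermonde,
        Matrix.one_apply_ne hij, Matrix.of_apply]
      rw [← heval, Lagrange.eval_basis_of_ne hij (mem_univ j)]
  have hVM : (Matrix.vandermonde a)ᵀ * M = 1 := mul_eq_one_comm.mp hMV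
  refine ⟨M.mulVec w, ?_, ?_⟩
  · rw [← Matrix.mulVec_transpose, Matrix.mulVec_mulVec, hVM, Matrix.one_mulVec]
  · -- norm bound
    set B : ℝ := (2 / ζ) ^ (m - 1) with hB
    have hBpos : 0 < B := by positivity
    have habs1 : ∀ j : Fin m, |a j| ≤ 1 := fun j =>
      abs_le.mpr ⟨by linarith [(ha j).1], (ha j).2⟩
    have hMbound : ∀ i k : Fin m, |M i k| ≤ B := by
      intro i k
      have hbasis : Lagrange.basis univ a i
          = Polynomial.C (Lagrange.nodalWeight univ a i)
            * Lagrange.nodal ((univ : Finset (Fin m)).erase i) a := by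
        rw [Lagrange.basis_eq_prod_sub_inv_mul_nodal_div (mem_univ i),
          ← Lagrange.nodal_erase_eq_nodal_div (mem_univ i)]
      have hcard : ((univ : Finset (Fin m)).erase i).card = m - 1 := by
        rw [card_erase_of_mem (mem_univ i), card_univ, Fintype.card_fin]
      have hw : |Lagrange.nodalWeight univ a i| ≤ ζ⁻¹ ^ (m - 1) := by
        rw [Lagrange.nodalWeight, abs_prod]
        calc ∏ j ∈ univ.erase i, |(a i - a j)⁻¹|
            ≤ ∏ _j ∈ univ.erase i, ζ⁻¹ := by
              apply Finset.prod_le_prod (fun j _ => abs_nonneg _)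
              intro j hj
              rw [abs_inv]
              exact inv_anti₀ hζ
                (le_of_lt (hsep i j (fun h => (mem_erase.mp hj).1 h.symm)))
          _ = ζ⁻¹ ^ (m - 1) := by rw [prod_const, hcard]
      have hcoeff : |(Lagrange.nodal ((univ : Finset (Fin m)).erase i) a).coeff k|
          ≤ 2 ^ (m - 1) := by
        have := coeff_nodal_bound ((univ : Finset (Fin m)).erase i) a
          (fun j _ => habs1 j) k
        rwa [hcard] at this
      have hMik : M i k = Lagrange.nodalWeight univ a i
          * (Lagrange.nodal ((univ : Finset (Fin m)).erase i) a).coeff k := by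
        rw [hM]
        simp only
        rw [hbasis, Polynomial.coeff_C_mul]
      rw [hMik, abs_mul, hB]
      calc |Lagrange.nodalWeight univ a i|
            * |(Lagrange.nodal ((univ : Finset (Fin m)).erase i) a).coeff k|
          ≤ ζ⁻¹ ^ (m - 1) * 2 ^ (m - 1) :=
            mul_le_mul hw hcoeff (abs_nonneg _) (by positivity)
        _ = (2 / ζ) ^ (m - 1) := by
            rw [div_eq_mul_inv, mul_pow]; ring
    set S : ℝ := ∑ k, |w k| with hS
    have hSnonneg : 0 ≤ S := sum_nonneg fun k _ => abs_nonneg _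
    have hlam : ∀ i, |M.mulVec w i| ≤ B * S := by
      intro i
      show |∑ k, M i k * w k| ≤ B * S
      calc |∑ k, M i k * w k| ≤ ∑ k, |M i k * w k| := Finset.abs_sum_le_sum_abs _ _
        _ ≤ ∑ k, B * |w k| := by
            apply sum_le_sum
            intro k _
            rw [abs_mul]
            exact mul_le_mul_of_nonneg_right (hMbound i k) (abs_nonneg _)
        _ = B * S := by rw [← mul_sum]
    set W : ℝ := Real.sqrt (∑ i, w i ^ 2) with hW
    have hWnn : 0 ≤ W := Real.sqrt_nonneg _
    have hWS : S ^ 2 ≤ (m : ℝ) * ∑ i, w i ^ 2 := by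
      have := sq_sum_le_card_mul_sum_sq (s := (univ : Finset (Fin m)))
        (f := fun k => |w k|)
      simpa [sq_abs, card_univ] using this
    have hSW : S ≤ Real.sqrt m * W := by
      calc S = Real.sqrt (S ^ 2) := (Real.sqrt_sq hSnonneg).symm
        _ ≤ Real.sqrt ((m : ℝ) * ∑ i, w i ^ 2) := Real.sqrt_le_sqrt hWS
        _ = Real.sqrt m * W := Real.sqrt_mul (Nat.cast_nonneg m) _
    have hsum : ∑ i, (M.mulVec w i) ^ 2 ≤ (m : ℝ) * (B * S) ^ 2 := by
      calc ∑ i, (M.mulVec w i) ^ 2 ≤ ∑ _i : Fin m, (B * S) ^ 2 := by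
            apply sum_le_sum
            intro i _
            rw [← sq_abs]
            exact pow_le_pow_left₀ (abs_nonneg _) (hlam i) 2
        _ = (m : ℝ) * (B * S) ^ 2 := by
            rw [sum_const, card_univ, Fintype.card_fin, nsmul_eq_mul]
    have hBSnn : 0 ≤ B * S := mul_nonneg hBpos.le hSnonneg
    have hB2 : B ≤ (2 / ζ) ^ (2 * m - 2) := by
      have h1 : (1 : ℝ) ≤ 2 / ζ := by rw [le_div_iff₀ hζ]; linarith
      exact pow_le_pow_right₀ h1 (by omega)
    calc Real.sqrt (∑ i, M.mulVec w i ^ 2)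
        ≤ Real.sqrt ((m : ℝ) * (B * S) ^ 2) := Real.sqrt_le_sqrt hsum
      _ = Real.sqrt m * (B * S) := by
          rw [Real.sqrt_mul (Nat.cast_nonneg m), Real.sqrt_sq hBSnn]
      _ ≤ Real.sqrt m * (B * (Real.sqrt m * W)) := by
          apply mul_le_mul_of_nonneg_left _ (Real.sqrt_nonneg (m : ℝ))
          exact mul_le_mul_of_nonneg_left hSW hBpos.le
      _ = (Real.sqrt m * Real.sqrt m) * B * W := by ring
      _ = (m : ℝ) * B * W := by rw [Real.mul_self_sqrt (Nat.cast_nonneg m)]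
      _ ≤ (2 / ζ) ^ (2 * m - 2) * m * W := by
          have : (m : ℝ) * B ≤ (2 / ζ) ^ (2 * m - 2) * m := by
            rw [mul_comm]
            exact mul_le_mul_of_nonneg_right hB2 (Nat.cast_nonneg m)
          exact mul_le_mul_of_nonneg_right this hWnn
end

section
/- There is an absolute constant C > 0 with the following property. Let D and e be positive integers, let ν ≥ 0, and let (c_α) be real coefficients indexed by tuples α ∈ {0,1,...,e}^D with α_1 + ··· + α_D = e. Suppose that |Σ_α c_α · z_1^{α_1} ··· z_D^{α_D}| ≤ ν for every z ∈ {1/(e+1), 2/(e+1), ..., 1}^D. Then |c_α| ≤ (C·e)^{C·e·D} · ν for every such α. -/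
/-!
Interpolation at the tensor grid inverts the evaluation map. In one variable, the coefficients of
the Lagrange basis polynomials at `e + 1` distinct nodes form the matrix inverse to the
Vandermonde matrix `(x_j ^ b)`; tensoring over the `D` coordinates expresses each coefficient `c_α`
as a combination of the `(e + 1)^D` grid values with weights `∏ᵢ coeff_{αᵢ} L_{kᵢ}`. For nodes in
`[-1, 1]` with mutual distance at least `1/(e+1)` each Lagrange coefficient is at most
`(2(e + 1))^e`, which gives `|c_α| ≤ (e + 1)^D (2(e + 1))^{eD} ν ≤ (4e)^{4eD} ν`.
-/

open Polynomial Finset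

lemma abs_coeff_prod_X_sub_C_le {ι : Type*} [DecidableEq ι] (s : Finset ι) {w : ι → ℝ}
    (hw : ∀ j ∈ s, |w j| ≤ 1) (a : ℕ) :
    |(∏ j ∈ s, (X - C (w j))).coeff a| ≤ 2 ^ #s := by
  induction s using Finset.induction_on generalizing a with
  | empty => cases a <;> simp [coeff_one]
  | insert j s hj ih =>
    have ih := ih fun m hm => hw m (mem_insert_of_mem hm)
    have hwj := hw j (mem_insert_self j s)
    rw [prod_insert hj, card_insert_of_notMem hj, pow_succ']
    set Q := ∏ m ∈ s, (X - C (w m))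
    have hshift : |(X * Q).coeff a| ≤ 2 ^ #s := by
      cases a with
      | zero => simp
      | succ a => rw [coeff_X_mul]; exact ih a
    calc |((X - C (w j)) * Q).coeff a| = |(X * Q).coeff a - w j * Q.coeff a| := by
          rw [sub_mul, coeff_sub, coeff_C_mul]
      _ ≤ |(X * Q).coeff a| + |w j| * |Q.coeff a| := by rw [← abs_mul]; exact abs_sub _ _
      _ ≤ 2 ^ #s + 1 * 2 ^ #s := by gcongr; exact ih a
      _ = 2 * 2 ^ #s := by ring

lemma abs_coeff_lagrangeBasis_le {ι : Type*} [DecidableEq ι] {s : Finset ι} {v : ι → ℝ}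
    (hv : ∀ j ∈ s, |v j| ≤ 1) {δ : ℝ} (hδ : 0 < δ)
    {j : ι} (hj : j ∈ s) (hsep : ∀ m ∈ s, m ≠ j → δ ≤ |v j - v m|) (a : ℕ) :
    |(Lagrange.basis s v j).coeff a| ≤ (2 / δ) ^ (#s - 1) := by
  have hbasis : Lagrange.basis s v j
      = C (∏ m ∈ s.erase j, (v j - v m)⁻¹) * ∏ m ∈ s.erase j, (X - C (v m)) := by
    simp only [Lagrange.basis, Lagrange.basisDivisor, prod_mul_distrib, map_prod]
  have hinv : ∏ m ∈ s.erase j, |(v j - v m)⁻¹| ≤ ∏ _m ∈ s.erase j, δ⁻¹ :=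
    prod_le_prod (fun _ _ => abs_nonneg _) fun m hm => by
      rw [abs_inv]; exact inv_anti₀ hδ (hsep m (mem_of_mem_erase hm) (ne_of_mem_erase hm))
  have hprod := abs_coeff_prod_X_sub_C_le (s.erase j) (fun m hm => hv m (mem_of_mem_erase hm)) a
  rw [← card_erase_of_mem hj]
  calc |(Lagrange.basis s v j).coeff a|
      = (∏ m ∈ s.erase j, |(v j - v m)⁻¹|) * |(∏ m ∈ s.erase j, (X - C (v m))).coeff a| := by
        rw [hbasis, coeff_C_mul, abs_mul, abs_prod]
    _ ≤ δ⁻¹ ^ #(s.erase j) * 2 ^ #(s.erase j) := by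
        refine mul_le_mul (by simpa using hinv) hprod (abs_nonneg _) (by positivity)
    _ = (2 / δ) ^ #(s.erase j) := by rw [div_eq_mul_inv, mul_pow, mul_comm]

lemma sum_pow_mul_coeff_lagrangeBasis {F ι : Type*} [Field F] [DecidableEq ι] {s : Finset ι}
    {v : ι → F} (hvs : Set.InjOn v s) {b : ℕ} (hb : b < #s) (a : ℕ) :
    ∑ j ∈ s, v j ^ b * (Lagrange.basis s v j).coeff a = if a = b then 1 else 0 := by
  have hinterp := congrArg (coeff · a) (Lagrange.eq_interpolate hvs (f := X ^ b)
    (by rw [degree_X_pow]; exact_mod_cast hb))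
  simpa only [Lagrange.interpolate_apply, eval_pow, eval_X, finsetSum_coeff, coeff_C_mul,
    coeff_X_pow, eq_comm] using hinterp.symm

lemma eq_sum_prod_coeff_lagrangeBasis_mul_eval {F σ : Type*} [Field F] [Fintype σ]
    [DecidableEq σ] {n : ℕ} {v : Fin (n + 1) → F} (hv : Function.Injective v)
    (c : (σ → Fin (n + 1)) → F) (α : σ → Fin (n + 1)) :
    c α = ∑ k : σ → Fin (n + 1), (∏ i, (Lagrange.basis univ v (k i)).coeff (α i)) *
      ∑ β, c β * ∏ i, v (k i) ^ (β i : ℕ) := by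
  have hdual : ∀ a b : Fin (n + 1),
      ∑ j, (Lagrange.basis univ v j).coeff a * v j ^ (b : ℕ) = if a = b then 1 else 0 := by
    intro a b
    simpa only [mul_comm, Fin.val_inj, card_univ, Fintype.card_fin] using
      sum_pow_mul_coeff_lagrangeBasis hv.injOn (b := b) (by simp [b.is_le]) a
  symm
  calc ∑ k : σ → Fin (n + 1), (∏ i, (Lagrange.basis univ v (k i)).coeff (α i)) *
        ∑ β, c β * ∏ i, v (k i) ^ (β i : ℕ)
      = ∑ β, c β * ∑ k : σ → Fin (n + 1),
          ∏ i, (Lagrange.basis univ v (k i)).coeff (α i) * v (k i) ^ (β i : ℕ) := by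
        simp only [mul_sum, prod_mul_distrib]
        rw [sum_comm]
        exact sum_congr rfl fun _ _ => sum_congr rfl fun _ _ => by ring
    _ = ∑ β, c β * if α = β then 1 else 0 := by
        refine sum_congr rfl fun β _ => ?_
        rw [← Fintype.prod_sum fun i j => (Lagrange.basis univ v j).coeff (α i) * v j ^ (β i : ℕ)]
        simp only [hdual, prod_boole, mem_univ, true_implies, funext_iff]
    _ = c α := by simp

lemma abs_le_of_forall_abs_eval_grid_le {σ : Type*} [Fintype σ] [DecidableEq σ] {n : ℕ}
    {v : Fin (n + 1) → ℝ} (hv : Function.Injective v) {M : ℝ}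
    (hM : ∀ j a, |(Lagrange.basis univ v j).coeff a| ≤ M) {ν : ℝ} (c : (σ → Fin (n + 1)) → ℝ)
    (hc : ∀ k : σ → Fin (n + 1), |∑ β, c β * ∏ i, v (k i) ^ (β i : ℕ)| ≤ ν)
    (α : σ → Fin (n + 1)) :
    |c α| ≤ ((n : ℝ) + 1) ^ Fintype.card σ * M ^ Fintype.card σ * ν := by
  have hM0 : 0 ≤ M := (abs_nonneg _).trans (hM 0 0)
  rw [eq_sum_prod_coeff_lagrangeBasis_mul_eval hv c α]
  calc |∑ k : σ → Fin (n + 1), (∏ i, (Lagrange.basis univ v (k i)).coeff (α i)) *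
        ∑ β, c β * ∏ i, v (k i) ^ (β i : ℕ)|
      ≤ ∑ _k : σ → Fin (n + 1), M ^ Fintype.card σ * ν := by
        refine (abs_sum_le_sum_abs _ _).trans (sum_le_sum fun k _ => ?_)
        rw [abs_mul, abs_prod]
        refine mul_le_mul ?_ (hc k) (abs_nonneg _) (by positivity)
        exact (prod_le_prod (fun i _ => abs_nonneg _) fun i _ => hM (k i) (α i)).trans_eq
          (by rw [prod_const, card_univ])
    _ = ((n : ℝ) + 1) ^ Fintype.card σ * M ^ Fintype.card σ * ν := by
        simp [card_univ, mul_assoc]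

noncomputable def gridNode (e : ℕ) (j : Fin (e + 1)) : ℝ := ((j : ℕ) + 1 : ℝ) / ((e : ℝ) + 1)

lemma gridNode_injective (e : ℕ) : Function.Injective (gridNode e) := by
  intro i j h
  have h' := (div_left_inj' (by positivity : (e : ℝ) + 1 ≠ 0)).mp h
  exact Fin.ext (by exact_mod_cast add_right_cancel h')

lemma abs_gridNode_le_one (e : ℕ) (j : Fin (e + 1)) : |gridNode e j| ≤ 1 := by
  rw [gridNode, abs_of_nonneg (by positivity), div_le_one (by positivity)]
  exact_mod_cast j.is_lt

lemma inv_le_abs_gridNode_sub (e : ℕ) {j m : Fin (e + 1)} (h : m ≠ j) :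
    ((e : ℝ) + 1)⁻¹ ≤ |gridNode e j - gridNode e m| := by
  have hdist : (1 : ℝ) ≤ |((j : ℕ) : ℝ) - (m : ℕ)| := by
    have hne : ((j : ℕ) : ℤ) - (m : ℕ) ≠ 0 := sub_ne_zero.mpr (by omega)
    exact_mod_cast Int.one_le_abs hne
  rw [gridNode, gridNode, div_sub_div_same, add_sub_add_right_eq_sub, abs_div,
    abs_of_pos (by positivity : (0 : ℝ) < e + 1), inv_eq_one_div]
  gcongr

lemma abs_coeff_lagrangeBasis_gridNode_le (e : ℕ) (j : Fin (e + 1)) (a : ℕ) :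
    |(Lagrange.basis univ (gridNode e) j).coeff a| ≤ (2 * ((e : ℝ) + 1)) ^ e := by
  simpa using abs_coeff_lagrangeBasis_le (fun m _ => abs_gridNode_le_one e m) (by positivity)
    (mem_univ j) (fun m _ hm => inv_le_abs_gridNode_sub e hm) a

lemma succ_mul_two_mul_succ_pow_le (e : ℕ) :
    ((e : ℝ) + 1) * (2 * ((e : ℝ) + 1)) ^ e ≤ (4 * e) ^ (4 * e) := by
  rcases Nat.eq_zero_or_pos e with rfl | he
  · simp
  have he1 : (1 : ℝ) ≤ e := by exact_mod_cast he
  calc ((e : ℝ) + 1) * (2 * ((e : ℝ) + 1)) ^ e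
      ≤ (2 * ((e : ℝ) + 1)) ^ (e + 1) := by
        rw [pow_succ']; exact mul_le_mul_of_nonneg_right (by linarith) (by positivity)
    _ ≤ (4 * e) ^ (e + 1) := pow_le_pow_left₀ (by positivity) (by linarith) _
    _ ≤ (4 * e) ^ (4 * e) := pow_le_pow_right₀ (by linarith) (by omega)

/-- There is an absolute constant `C > 0` with the following property: if a homogeneous
degree-`e` form `∑_α c_α z^α` in `D` variables is at most `ν` in absolute value on the
grid `{1/(e+1), 2/(e+1), …, 1}^D`, then every coefficient satisfies
`|c_α| ≤ (C e)^{C e D} ν`. -/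
theorem grid_coefficient_bound :
    ∃ C : ℝ, 0 < C ∧ ∀ (D e : ℕ), 0 < D → 0 < e → ∀ ν : ℝ, 0 ≤ ν →
      ∀ c : (Fin D → Fin (e + 1)) → ℝ,
        (∀ k : Fin D → Fin (e + 1),
          |∑ α ∈ Finset.univ.filter (fun α : Fin D → Fin (e + 1) => ∑ i, (α i : ℕ) = e),
              c α * ∏ i, (((k i : ℕ) + 1 : ℝ) / ((e : ℝ) + 1)) ^ (α i : ℕ)| ≤ ν) →
        ∀ α : Fin D → Fin (e + 1), (∑ i, (α i : ℕ)) = e →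
          |c α| ≤ (C * (e : ℝ)) ^ (C * (e : ℝ) * (D : ℝ)) * ν := by
  refine ⟨4, by norm_num, fun D e _ _ ν hν c hgrid α hα => ?_⟩
  set c' : (Fin D → Fin (e + 1)) → ℝ := fun β => if ∑ i, (β i : ℕ) = e then c β else 0
  have heval : ∀ k : Fin D → Fin (e + 1),
      |∑ β, c' β * ∏ i, gridNode e (k i) ^ (β i : ℕ)| ≤ ν := fun k => by
    simpa only [c', ite_mul, zero_mul, ← sum_filter, gridNode] using hgrid k
  have hcoeff := abs_le_of_forall_abs_eval_grid_le (gridNode_injective e)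
    (abs_coeff_lagrangeBasis_gridNode_le e) c' heval α
  rw [show c' α = c α from if_pos hα, Fintype.card_fin, ← mul_pow] at hcoeff
  calc |c α| ≤ (((e : ℝ) + 1) * (2 * ((e : ℝ) + 1)) ^ e) ^ D * ν := hcoeff
    _ ≤ ((4 * e) ^ (4 * e)) ^ D * ν := by gcongr; exact succ_mul_two_mul_succ_pow_le e
    _ = (4 * (e : ℝ)) ^ (4 * (e : ℝ) * (D : ℝ)) * ν := by
        rw [← pow_mul, ← Real.rpow_natCast]
        push_cast
        rfl
end

section
/- Let d be a positive integer, let 0 ≤ ε ≤ 1, and let (x_{ij})_{1≤i,j≤d} be real numbers satisfying |Σ_{j=1}^d x_{ij}² − 1| ≤ ε for every i, and |Σ_{j=1}^d x_{ij} x_{i'j}| ≤ ε for every pair i ≠ i'. Then |Σ_{i=1}^d x_{ij}² − 1| ≤ 4 √(ε d³) for every j, and |Σ_{i=1}^d x_{ij} x_{ij'}| ≤ 2 √ε · d for every pair j ≠ j'. That is, if the rows of a d×d matrix are ε-approximately orthonormal, its columns are O(√ε · d^{3/2})-approximately orthonormal. -/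
private lemma swap4 {d : ℕ} (f : Fin d → Fin d → Fin d → Fin d → ℝ) :
    ∑ a, ∑ b, ∑ c, ∑ e, f a b c e = ∑ c, ∑ e, ∑ a, ∑ b, f a b c e := by
  calc ∑ a, ∑ b, ∑ c, ∑ e, f a b c e
      = ∑ a, ∑ c, ∑ b, ∑ e, f a b c e :=
        Finset.sum_congr rfl fun a _ => Finset.sum_comm
    _ = ∑ c, ∑ a, ∑ b, ∑ e, f a b c e := Finset.sum_comm
    _ = ∑ c, ∑ a, ∑ e, ∑ b, f a b c e :=
        Finset.sum_congr rfl fun c _ => Finset.sum_congr rfl fun a _ => Finset.sum_comm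
    _ = ∑ c, ∑ e, ∑ a, ∑ b, f a b c e :=
        Finset.sum_congr rfl fun c _ => Finset.sum_comm

/-- If the rows of a `d × d` real matrix are `ε`-approximately orthonormal, then its
columns are approximately orthonormal: each column norm is within `4√(εd³)` of `1` and
distinct columns have inner products at most `2√ε d` in absolute value. -/
theorem approx_row_orthonormal_implies_column (d : ℕ) (hd : 0 < d)
    (ε : ℝ) (hε0 : 0 ≤ ε) (hε1 : ε ≤ 1)
    (x : Fin d → Fin d → ℝ)
    (hrow : ∀ i, |∑ j, x i j ^ 2 - 1| ≤ ε)
    (horth : ∀ i i', i ≠ i' → |∑ j, x i j * x i' j| ≤ ε) :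
    (∀ j, |∑ i, x i j ^ 2 - 1| ≤ 4 * Real.sqrt (ε * (d : ℝ) ^ 3)) ∧
    (∀ j j', j ≠ j' → |∑ i, x i j * x i j'| ≤ 2 * Real.sqrt ε * d) := by
  set S : Fin d → Fin d → ℝ := fun j j' => ∑ i, x i j * x i j' with hS
  set R : Fin d → Fin d → ℝ := fun i i' => ∑ j, x i j * x i' j with hR
  -- expansion of the "Frobenius distance to identity"
  have expand : ∀ (M : Fin d → Fin d → ℝ),
      ∑ j, ∑ j', (M j j' - if j = j' then (1:ℝ) else 0)^2
      = (∑ j, ∑ j', (M j j')^2) - 2 * (∑ j, M j j) + d := by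
    intro M
    have h1 : ∀ j : Fin d, ∑ j', (M j j' - if j = j' then (1:ℝ) else 0)^2
        = (∑ j', (M j j')^2) - 2 * M j j + 1 := by
      intro j
      have h2 : ∀ j' : Fin d, (M j j' - if j = j' then (1:ℝ) else 0)^2
          = (M j j')^2 - (if j = j' then 2 * M j j' else 0) + (if j = j' then 1 else 0) := by
        intro j'; split_ifs with h <;> ring
      rw [Finset.sum_congr rfl fun j' _ => h2 j']
      rw [Finset.sum_add_distrib, Finset.sum_sub_distrib,
        Finset.sum_ite_eq Finset.univ j (fun j' => 2 * M j j'),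
        Finset.sum_ite_eq Finset.univ j (fun _ => (1:ℝ))]
      simp
    rw [Finset.sum_congr rfl fun j _ => h1 j]
    rw [Finset.sum_add_distrib, Finset.sum_sub_distrib, ← Finset.mul_sum]
    simp [mul_comm]
  -- sum of squares identity
  have sumsq : ∑ j, ∑ j', (S j j')^2 = ∑ i, ∑ i', (R i i')^2 := by
    have l1 : ∀ (j j' : Fin d), (S j j')^2
        = ∑ i, ∑ i', (x i j * x i j') * (x i' j * x i' j') := by
      intro j j'
      rw [sq, hS]
      exact Finset.sum_mul_sum _ _ _ _
    have l2 : ∀ (i i' : Fin d), (R i i')^2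
        = ∑ j, ∑ j', (x i j * x i' j) * (x i j' * x i' j') := by
      intro i i'
      rw [sq, hR]
      exact Finset.sum_mul_sum _ _ _ _
    calc ∑ j, ∑ j', (S j j')^2
        = ∑ j, ∑ j', ∑ i, ∑ i', (x i j * x i j') * (x i' j * x i' j') :=
          Finset.sum_congr rfl fun j _ => Finset.sum_congr rfl fun j' _ => l1 j j'
      _ = ∑ i, ∑ i', ∑ j, ∑ j', (x i j * x i j') * (x i' j * x i' j') :=
          swap4 _
      _ = ∑ i, ∑ i', ∑ j, ∑ j', (x i j * x i' j) * (x i j' * x i' j') := by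
          refine Finset.sum_congr rfl fun i _ => Finset.sum_congr rfl fun i' _ =>
            Finset.sum_congr rfl fun j _ => Finset.sum_congr rfl fun j' _ => by ring
      _ = ∑ i, ∑ i', (R i i')^2 :=
          (Finset.sum_congr rfl fun i _ => Finset.sum_congr rfl fun i' _ => (l2 i i').symm)
  -- trace identity
  have trace : ∑ j, S j j = ∑ i, R i i := Finset.sum_comm
  -- key Frobenius identity
  have key : ∑ j, ∑ j', (S j j' - if j = j' then (1:ℝ) else 0)^2
      = ∑ i, ∑ i', (R i i' - if i = i' then (1:ℝ) else 0)^2 := by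
    rw [expand S, expand R, sumsq, trace]
  -- entrywise bound on rows
  have rowbound : ∀ i i' : Fin d, |R i i' - if i = i' then (1:ℝ) else 0| ≤ ε := by
    intro i i'
    by_cases h : i = i'
    · subst h
      simp only [if_pos rfl, hR]
      have : (∑ j, x i j * x i j) = ∑ j, x i j ^ 2 :=
        Finset.sum_congr rfl fun j _ => (sq (x i j)).symm
      rw [this]
      exact hrow i
    · simp only [if_neg h, sub_zero]
      exact horth i i' h
  have rhsbound : ∑ i, ∑ i', (R i i' - if i = i' then (1:ℝ) else 0)^2 ≤ (ε * d)^2 := by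
    have : ∀ i i' : Fin d, (R i i' - if i = i' then (1:ℝ) else 0)^2 ≤ ε^2 := by
      intro i i'
      rw [← sq_abs]
      exact pow_le_pow_left₀ (abs_nonneg _) (rowbound i i') 2
    calc ∑ i, ∑ i', (R i i' - if i = i' then (1:ℝ) else 0)^2
        ≤ ∑ i : Fin d, ∑ i' : Fin d, ε^2 :=
          Finset.sum_le_sum fun i _ => Finset.sum_le_sum fun i' _ => this i i'
      _ = d * (d * ε^2) := by simp [Finset.sum_const, mul_assoc]
      _ = (ε * d)^2 := by ring
  -- single entry bound for columns
  have colbound : ∀ j j' : Fin d, |S j j' - if j = j' then (1:ℝ) else 0| ≤ ε * d := by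
    intro j j'
    have h1 : (S j j' - if j = j' then (1:ℝ) else 0)^2
        ≤ ∑ j'', (S j j'' - if j = j'' then (1:ℝ) else 0)^2 :=
      Finset.single_le_sum (f := fun j'' => (S j j'' - if j = j'' then (1:ℝ) else 0)^2)
        (fun _ _ => sq_nonneg _) (Finset.mem_univ j')
    have h2 : (∑ j'', (S j j'' - if j = j'' then (1:ℝ) else 0)^2)
        ≤ ∑ a, ∑ j'', (S a j'' - if a = j'' then (1:ℝ) else 0)^2 :=
      Finset.single_le_sum (f := fun a => ∑ j'', (S a j'' - if a = j'' then (1:ℝ) else 0)^2)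
        (fun a _ => Finset.sum_nonneg fun _ _ => sq_nonneg _) (Finset.mem_univ j)
    have h3 : (S j j' - if j = j' then (1:ℝ) else 0)^2 ≤ (ε * d)^2 :=
      le_trans (le_trans h1 h2) (by rw [key]; exact rhsbound)
    have hεd : 0 ≤ ε * d := by positivity
    calc |S j j' - if j = j' then (1:ℝ) else 0|
        = Real.sqrt ((S j j' - if j = j' then (1:ℝ) else 0)^2) :=
          (Real.sqrt_sq_eq_abs _).symm
      _ ≤ Real.sqrt ((ε * d)^2) := Real.sqrt_le_sqrt h3
      _ = ε * d := Real.sqrt_sq hεd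
  have hd1 : (1:ℝ) ≤ d := by exact_mod_cast hd
  constructor
  · intro j
    have h := colbound j j
    simp only [if_pos rfl] at h
    have hSd : (∑ i, x i j ^ 2) = S j j :=
      Finset.sum_congr rfl fun i _ => sq (x i j)
    rw [hSd]
    refine le_trans h ?_
    have h1 : ε * d = Real.sqrt ((ε * d)^2) := (Real.sqrt_sq (by positivity)).symm
    rw [h1]
    have h2 : (ε * d)^2 ≤ ε * (d:ℝ)^3 := by
      calc (ε * (d:ℝ))^2 = (ε * ε) * (d:ℝ)^2 := by ring
        _ ≤ ε * (d:ℝ)^2 := mul_le_mul_of_nonneg_right (by nlinarith) (by positivity)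
        _ ≤ ε * (d:ℝ)^3 := mul_le_mul_of_nonneg_left (by nlinarith [sq_nonneg (d:ℝ)]) hε0
    calc Real.sqrt ((ε * d)^2) ≤ Real.sqrt (ε * (d:ℝ)^3) := Real.sqrt_le_sqrt h2
      _ ≤ 4 * Real.sqrt (ε * (d:ℝ)^3) := by
          nlinarith [Real.sqrt_nonneg (ε * (d:ℝ)^3)]
  · intro j j' hjj
    have h := colbound j j'
    simp only [if_neg hjj, sub_zero] at h
    have hεs : ε ≤ Real.sqrt ε := by
      nlinarith [Real.sq_sqrt hε0, Real.sqrt_le_one.mpr hε1, Real.sqrt_nonneg ε]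
    refine le_trans h ?_
    have : ε * d ≤ Real.sqrt ε * d := mul_le_mul_of_nonneg_right hεs (by positivity)
    nlinarith [Real.sqrt_nonneg ε, this]
end

section
/- There exist absolute constants c > 0 and C > 0 with the following property. For every positive integer m there exist N = m(m+1)/2 symmetric m×m real matrices M_1, ..., M_N that form a basis of the space of symmetric m×m matrices, such that each M_t has rank 1 and Frobenius norm 1, every entry of every M_t has absolute value at least c/m^7, and for every pair i, j ∈ {1,...,m} there exists λ ∈ ℝ^N with Σ_{t=1}^N λ_t M_t = e_i e_j^T + e_j e_i^T and ‖λ‖ ≤ C. -/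
/-!
Let `g_k = e_k + 𝟙/m` be the columns of `G = I + J/m`. Since `G⁻¹ = I - J/(2m)`, each `e_i` equals
`∑_k c_{ik} g_k` with `c_{ik} = δ_{ik} - 1/(2m)`, and `∑_k c_{ik}² ≤ 1`. The basis consists of the
matrices `a aᵀ / ‖a‖²` with `a = g_k + g_l`, one for each unordered pair `{k, l}`. Polarization,
`x yᵀ + y xᵀ = (x + y)(x + y)ᵀ - x xᵀ - y yᵀ`, writes
`e_i e_jᵀ + e_j e_iᵀ = ∑_{k,l} c_{ik} c_{jl} (g_k g_lᵀ + g_l g_kᵀ)` in terms of this family, with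
coefficients whose squares sum to `O(1)`. Hence these `m(m+1)/2` matrices span the symmetric
matrices, a space of that dimension, so they are linearly independent. Every entry of `g_k + g_l` is at least `2/m` and
`1 ≤ ‖g_k + g_l‖² ≤ 16`, so every entry of the basis is at least `1/(4m²)`.
-/

open Matrix Finset

section LinearIndependence
variable {K V ι : Type*} [Field K] [AddCommGroup V] [Module K V] [Fintype ι]

theorem linearIndependent_of_injective_le_span {v : ι → V} (f : (ι → K) →ₗ[K] V)
    (hf : Function.Injective f) (hrange : LinearMap.range f ≤ Submodule.span K (Set.range v)) :
    LinearIndependent K v := by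
  have := FiniteDimensional.span_of_finite K (Set.finite_range v)
  rw [linearIndependent_iff_card_eq_finrank_span]
  refine le_antisymm ?_ (finrank_range_le_card v)
  calc Fintype.card ι = Module.finrank K (ι → K) := (Module.finrank_fintype_fun_eq_card K).symm
    _ ≤ (Set.range v).finrank K :=
      LinearMap.finrank_le_finrank_of_injective (f := f.codRestrict _ fun c => hrange ⟨c, rfl⟩)
        (fun c d h => hf (congrArg Subtype.val h))

end LinearIndependence

section OuterProduct
variable {n : Type*} [Fintype n]

theorem rank_vecMulVec_eq_one {K : Type*} [Field K] {a b : n → K} (ha : a ≠ 0) (hb : b ≠ 0) :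
    (vecMulVec a b).rank = 1 := by
  classical
  refine le_antisymm (rank_vecMulVec_le a b) (Nat.one_le_iff_ne_zero.mpr ?_)
  obtain ⟨s, hs⟩ := Function.ne_iff.mp hb
  rw [Matrix.rank, Ne, Submodule.finrank_eq_zero, Submodule.eq_bot_iff]
  push Not
  refine ⟨vecMulVec a b *ᵥ Pi.single s 1, ⟨_, rfl⟩, ?_⟩
  rw [vecMulVec_mulVec, dotProduct_single_one, op_smul_eq_smul]
  exact smul_ne_zero hs ha

theorem sum_sq_pos_of_ne_zero {a : n → ℝ} (ha : a ≠ 0) : 0 < ∑ s, a s ^ 2 := by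
  obtain ⟨s, hs⟩ := Function.ne_iff.mp ha
  exact Finset.sum_pos' (fun _ _ => sq_nonneg _) ⟨s, mem_univ s, sq_pos_of_ne_zero hs⟩

noncomputable def unitOuter (a : n → ℝ) : Matrix n n ℝ := (∑ s, a s ^ 2)⁻¹ • vecMulVec a a

theorem unitOuter_apply (a : n → ℝ) (s s' : n) :
    unitOuter a s s' = a s * a s' / ∑ s, a s ^ 2 := by
  simp [unitOuter, vecMulVec_apply, div_eq_inv_mul]

theorem isSymm_unitOuter (a : n → ℝ) : (unitOuter a).IsSymm := by
  simp [unitOuter, IsSymm, transpose_smul, transpose_vecMulVec]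

theorem rank_unitOuter {a : n → ℝ} (ha : a ≠ 0) : (unitOuter a).rank = 1 := by
  rw [unitOuter, ← smul_vecMulVec]
  exact rank_vecMulVec_eq_one (smul_ne_zero (inv_ne_zero (sum_sq_pos_of_ne_zero ha).ne') ha) ha

theorem sum_sum_sq_unitOuter {a : n → ℝ} (ha : a ≠ 0) :
    ∑ s, ∑ s', unitOuter a s s' ^ 2 = 1 := by
  have := (sum_sq_pos_of_ne_zero ha).ne'
  simp_rw [unitOuter_apply, div_pow, mul_pow, ← sum_div, ← mul_sum, ← sum_mul]
  field_simp

end OuterProduct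

theorem Matrix.IsSymm.add_self_eq_sum {n R : Type*} [Fintype n] [DecidableEq n] [Semiring R]
    {S : Matrix n n R} (hS : S.IsSymm) :
    S + S = ∑ i, ∑ j, S i j • (single i j 1 + single j i 1) := by
  have hT : ∑ i, ∑ j, single j i (S i j) = S := by
    rw [sum_comm]
    simp_rw [hS.apply]
    exact (matrix_eq_sum_single S).symm
  simp_rw [smul_add, sum_add_distrib, smul_single, smul_eq_mul, mul_one, hT]
  rw [← matrix_eq_sum_single]

def symmMatrixOfSym2 (n R : Type*) [Semiring R] : (Sym2 n → R) →ₗ[R] Matrix n n R where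
  toFun φ := of fun i j => φ s(i, j)
  map_add' _ _ := rfl
  map_smul' _ _ := rfl

theorem symmMatrixOfSym2_injective (n R : Type*) [Semiring R] :
    Function.Injective (symmMatrixOfSym2 n R) := by
  intro φ ψ h
  funext z
  induction z using Sym2.ind with
  | _ i j => exact congrFun (congrFun h i) j

theorem isSymm_symmMatrixOfSym2 {n R : Type*} [Semiring R] (φ : Sym2 n → R) :
    (symmMatrixOfSym2 n R φ).IsSymm := by
  ext i j
  exact congrArg φ Sym2.eq_swap

theorem card_sym2_fin (m : ℕ) : Fintype.card (Sym2 (Fin m)) = m * (m + 1) / 2 := by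
  rw [Sym2.card, Fintype.card_fin, Nat.choose_two_right, Nat.add_sub_cancel, mul_comm]

theorem sum_sq_sum_fiber_le {ι κ α : Type*} [Fintype ι] [Fintype κ] [DecidableEq κ]
    [Semiring α] [LinearOrder α] [IsStrictOrderedRing α] [ExistsAddOfLE α]
    (g : ι → κ) {K : ℕ} (hK : ∀ z, #{p | g p = z} ≤ K) (f : ι → α) :
    ∑ z, (∑ p with g p = z, f p) ^ 2 ≤ K * ∑ p, f p ^ 2 := by
  calc ∑ z, (∑ p with g p = z, f p) ^ 2
      ≤ ∑ z, (#{p | g p = z} : α) * ∑ p with g p = z, f p ^ 2 :=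
        sum_le_sum fun z _ => sq_sum_le_card_mul_sum_sq
    _ ≤ ∑ z, (K : α) * ∑ p with g p = z, f p ^ 2 :=
        sum_le_sum fun z _ => by
          gcongr
          · exact sum_nonneg fun _ _ => sq_nonneg _
          · exact hK z
    _ = K * ∑ p, f p ^ 2 := by rw [← mul_sum, sum_fiberwise]

theorem card_filter_mk_eq_le_two {α : Type*} [Fintype α] [DecidableEq α] (z : Sym2 α) :
    #{p : α × α | s(p.1, p.2) = z} ≤ 2 := by
  induction z using Sym2.ind with
  | _ a b =>
    refine (card_le_card (t := {(a, b), (b, a)}) fun p hp => ?_).trans card_le_two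
    obtain ⟨h₁, h₂⟩ | ⟨h₁, h₂⟩ := Sym2.eq_iff.mp (mem_filter.mp hp).2 <;>
      simp [Prod.ext_iff, h₁, h₂]

theorem vecMulVec_add_vecMulVec_swap {n R : Type*} [Ring R] (x y : n → R) :
    vecMulVec x y + vecMulVec y x = vecMulVec (x + y) (x + y) - vecMulVec x x - vecMulVec y y := by
  rw [add_vecMulVec, vecMulVec_add, vecMulVec_add]
  abel

theorem vecMulVec_sum_smul_sum_smul {n ι κ R : Type*} [CommSemiring R] (a : ι → R) (b : κ → R)
    (x : ι → n → R) (y : κ → n → R) (s : Finset ι) (t : Finset κ) :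
    vecMulVec (∑ k ∈ s, a k • x k) (∑ l ∈ t, b l • y l)
      = ∑ k ∈ s, ∑ l ∈ t, (a k * b l) • vecMulVec (x k) (y l) := by
  ext u v
  simp only [vecMulVec_apply, Finset.sum_apply, Pi.smul_apply, smul_eq_mul, sum_mul_sum,
    Matrix.sum_apply, Matrix.smul_apply]
  exact sum_congr rfl fun _ _ => sum_congr rfl fun _ _ => by ring

section DoubleSum
variable {ι κ R M : Type*} [CommSemiring R] [AddCommMonoid M] [Module R M]
  (a : ι → R) (b : κ → R) (s : Finset ι) (t : Finset κ)

theorem sum_sum_mul_smul_left (v : ι → M) :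
    ∑ k ∈ s, ∑ l ∈ t, (a k * b l) • v k = (∑ l ∈ t, b l) • ∑ k ∈ s, a k • v k := by
  rw [smul_sum]
  refine sum_congr rfl fun k _ => ?_
  rw [← sum_smul, ← mul_sum, smul_smul, mul_comm]

theorem sum_sum_mul_smul_right (v : κ → M) :
    ∑ k ∈ s, ∑ l ∈ t, (a k * b l) • v l = (∑ k ∈ s, a k) • ∑ l ∈ t, b l • v l := by
  rw [sum_comm, smul_sum]
  refine sum_congr rfl fun l _ => ?_
  rw [← sum_smul, ← sum_mul, smul_smul]

end DoubleSum

namespace RankOneBasis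
variable {m : ℕ}

noncomputable def col (m : ℕ) (k s : Fin m) : ℝ := (if k = s then 1 else 0) + (m : ℝ)⁻¹

-- the rows of `(I + J/m)⁻¹ = I - J/(2m)`
noncomputable def coeff (m : ℕ) (i k : Fin m) : ℝ := (if i = k then 1 else 0) - (2 * m : ℝ)⁻¹

theorem sum_coeff (hm : 0 < m) (i : Fin m) : ∑ k, coeff m i k = 1 / 2 := by
  have : (m : ℝ) ≠ 0 := by positivity
  simp only [coeff, sum_sub_distrib, sum_ite_eq, mem_univ, if_true, sum_const, card_univ,
    Fintype.card_fin, nsmul_eq_mul]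
  field_simp
  norm_num

theorem sum_coeff_sq_le_one (hm : 0 < m) (i : Fin m) : ∑ k, coeff m i k ^ 2 ≤ 1 := by
  have : (0 : ℝ) < m := by positivity
  simp only [coeff, sub_sq, apply_ite (· ^ 2), one_pow, zero_pow two_ne_zero, mul_ite, mul_one,
    mul_zero, ite_mul, zero_mul, sum_add_distrib, sum_sub_distrib, sum_ite_eq, mem_univ, if_true,
    sum_const, card_univ, Fintype.card_fin, nsmul_eq_mul]
  field_simp
  linarith

theorem sum_coeff_smul_col (hm : 0 < m) (i : Fin m) :
    ∑ k, coeff m i k • col m k = Pi.single i 1 := by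
  ext s
  have : (m : ℝ) ≠ 0 := by positivity
  simp only [Finset.sum_apply, Pi.smul_apply, smul_eq_mul, col, mul_add, sum_add_distrib,
    ← sum_mul, sum_coeff hm]
  simp only [coeff, Pi.single_apply, eq_comm, mul_ite, mul_one, mul_zero, sum_ite_eq, mem_univ,
    if_true]
  field_simp
  ring

noncomputable def vec (m : ℕ) : Sym2 (Fin m) → Fin m → ℝ :=
  Sym2.lift ⟨fun k l => col m k + col m l, fun _ _ => add_comm _ _⟩

@[simp]
theorem vec_mk (k l : Fin m) : vec m s(k, l) = col m k + col m l := rfl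

theorem inv_le_col (k s : Fin m) : (m : ℝ)⁻¹ ≤ col m k s := by
  unfold col; split_ifs <;> linarith

theorem two_div_le_vec (z : Sym2 (Fin m)) (s : Fin m) : 2 / (m : ℝ) ≤ vec m z s := by
  induction z using Sym2.ind with
  | _ k l => rw [vec_mk, Pi.add_apply, div_eq_mul_inv]; linarith [inv_le_col k s, inv_le_col l s]

theorem one_le_sum_vec_sq (z : Sym2 (Fin m)) : 1 ≤ ∑ s, vec m z s ^ 2 := by
  induction z using Sym2.ind with
  | _ k l =>
    have hk : 1 ≤ vec m s(k, l) k := by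
      have hkk : col m k k = 1 + (m : ℝ)⁻¹ := by simp [col]
      have : (0 : ℝ) ≤ (m : ℝ)⁻¹ := by positivity
      rw [vec_mk, Pi.add_apply, hkk]
      linarith [inv_le_col l k]
    calc (1 : ℝ) ≤ vec m s(k, l) k ^ 2 := by nlinarith
      _ ≤ ∑ s, vec m s(k, l) s ^ 2 :=
          single_le_sum (fun s _ => sq_nonneg (vec m s(k, l) s)) (mem_univ k)

theorem sum_col_sq_le (hm : 0 < m) (k : Fin m) : ∑ s, col m k s ^ 2 ≤ 4 := by
  have : (1 : ℝ) ≤ m := by exact_mod_cast hm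
  simp only [col, add_sq, apply_ite (· ^ 2), one_pow, zero_pow two_ne_zero, mul_ite, mul_one,
    mul_zero, ite_mul, zero_mul, sum_add_distrib, sum_ite_eq, mem_univ, if_true, sum_const, card_univ,
    Fintype.card_fin, nsmul_eq_mul]
  field_simp
  linarith

theorem sum_vec_sq_le (hm : 0 < m) (z : Sym2 (Fin m)) : ∑ s, vec m z s ^ 2 ≤ 16 := by
  induction z using Sym2.ind with
  | _ k l =>
    calc ∑ s, vec m s(k, l) s ^ 2 ≤ ∑ s, (2 * col m k s ^ 2 + 2 * col m l s ^ 2) :=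
          sum_le_sum fun s _ => by
            rw [vec_mk, Pi.add_apply]
            nlinarith [sq_nonneg (col m k s - col m l s)]
      _ ≤ 16 := by
          rw [sum_add_distrib, ← mul_sum, ← mul_sum]
          linarith [sum_col_sq_le hm k, sum_col_sq_le hm l]

theorem single_add_single_eq_sum (hm : 0 < m) (i j : Fin m) :
    single i j (1 : ℝ) + single j i 1 = ∑ k, ∑ l, (coeff m i k * coeff m j l) •
      (vecMulVec (col m k) (col m l) + vecMulVec (col m l) (col m k)) := by
  simp_rw [single_eq_single_vecMulVec_single, ← sum_coeff_smul_col hm,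
    vecMulVec_sum_smul_sum_smul, smul_add, sum_add_distrib]
  rw [sum_comm (f := fun l k => (coeff m j l * coeff m i k) • vecMulVec (col m l) (col m k))]
  simp_rw [mul_comm (coeff m j _)]

-- The diagonal term absorbs the `g_k g_kᵀ` parts of the polarization, as `∑_l c_{jl} = 1/2`.
noncomputable def pairCoeff (m : ℕ) (i j : Fin m) (p : Fin m × Fin m) : ℝ :=
  coeff m i p.1 * coeff m j p.2 - if p.1 = p.2 then (coeff m i p.1 + coeff m j p.1) / 8 else 0

theorem sum_pairCoeff_smul (hm : 0 < m) (i j : Fin m) :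
    ∑ p : Fin m × Fin m, pairCoeff m i j p • vecMulVec (vec m s(p.1, p.2)) (vec m s(p.1, p.2))
      = single i j 1 + single j i 1 := by
  set A : Fin m → Fin m → Matrix (Fin m) (Fin m) ℝ :=
    fun k l => vecMulVec (col m k + col m l) (col m k + col m l)
  have hdiag : ∀ k, A k k = (4 : ℝ) • vecMulVec (col m k) (col m k) := by
    intro k
    simp only [A, ← two_smul ℝ (col m k), smul_vecMulVec, vecMulVec_smul, smul_smul]
    norm_num
  calc ∑ p : Fin m × Fin m, pairCoeff m i j p • vecMulVec (vec m s(p.1, p.2)) (vec m s(p.1, p.2))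
      = ∑ k, ∑ l, (coeff m i k * coeff m j l) • A k l
          - ∑ k, ((coeff m i k + coeff m j k) / 8) • A k k := by
        simp_rw [Fintype.sum_prod_type, pairCoeff, sub_smul, sum_sub_distrib, ite_smul, zero_smul]
        simp [A]
    _ = ∑ k, ∑ l, (coeff m i k * coeff m j l) •
          (A k l - vecMulVec (col m k) (col m k) - vecMulVec (col m l) (col m l)) := by
        simp_rw [smul_sub, sum_sub_distrib, sum_sum_mul_smul_left, sum_sum_mul_smul_right,
          sum_coeff hm, sub_sub, hdiag, smul_sum, smul_smul, ← sum_add_distrib, ← add_smul]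
        congr 1
        refine sum_congr rfl fun k _ => by congr 1; ring
    _ = single i j 1 + single j i 1 := by
        simp_rw [single_add_single_eq_sum hm, A, vecMulVec_add_vecMulVec_swap]

theorem sum_pairCoeff_sq_le (hm : 0 < m) (i j : Fin m) :
    ∑ p, pairCoeff m i j p ^ 2 ≤ 3 := by
  have hi := sum_coeff_sq_le_one hm i
  have hj := sum_coeff_sq_le_one hm j
  calc ∑ p, pairCoeff m i j p ^ 2
      ≤ ∑ p : Fin m × Fin m, (2 * (coeff m i p.1 * coeff m j p.2) ^ 2
          + 2 * (if p.1 = p.2 then (coeff m i p.1 + coeff m j p.1) / 8 else 0) ^ 2) :=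
        sum_le_sum fun p _ => by
          rw [pairCoeff]
          nlinarith [sq_nonneg (coeff m i p.1 * coeff m j p.2 +
            if p.1 = p.2 then (coeff m i p.1 + coeff m j p.1) / 8 else 0)]
    _ = 2 * ((∑ k, coeff m i k ^ 2) * ∑ l, coeff m j l ^ 2)
          + ∑ k, (coeff m i k + coeff m j k) ^ 2 / 32 := by
        rw [sum_add_distrib, ← mul_sum, ← mul_sum, Fintype.sum_prod_type, Fintype.sum_prod_type,
          sum_mul_sum]
        congr 1
        · simp_rw [mul_pow]
        · simp only [ite_pow, zero_pow two_ne_zero, sum_ite_eq, mem_univ, if_true, mul_sum]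
          exact sum_congr rfl fun _ _ => by ring
    _ ≤ 3 := by
        have hcross : ∑ k, (coeff m i k + coeff m j k) ^ 2 / 32 ≤ 1 / 8 :=
          calc ∑ k, (coeff m i k + coeff m j k) ^ 2 / 32
              ≤ ∑ k, (coeff m i k ^ 2 + coeff m j k ^ 2) / 16 :=
                sum_le_sum fun k _ => by nlinarith [sq_nonneg (coeff m i k - coeff m j k)]
            _ ≤ 1 / 8 := by rw [← sum_div, sum_add_distrib]; linarith
        have hprod := mul_le_one₀ hi (sum_nonneg fun k _ => sq_nonneg (coeff m j k)) hj
        linarith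

noncomputable def symCoeff (m : ℕ) (i j : Fin m) (z : Sym2 (Fin m)) : ℝ :=
  ∑ p : Fin m × Fin m with s(p.1, p.2) = z, pairCoeff m i j p

theorem sum_symCoeff_smul (hm : 0 < m) (i j : Fin m) :
    ∑ z, symCoeff m i j z • vecMulVec (vec m z) (vec m z) = single i j 1 + single j i 1 := by
  rw [← sum_pairCoeff_smul hm, ← sum_fiberwise _ (fun p : Fin m × Fin m => s(p.1, p.2))]
  refine sum_congr rfl fun z _ => ?_
  rw [symCoeff, sum_smul]
  exact sum_congr rfl fun p hp => by rw [(mem_filter.mp hp).2]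

theorem sum_symCoeff_sq_le (hm : 0 < m) (i j : Fin m) : ∑ z, symCoeff m i j z ^ 2 ≤ 6 := by
  have hfiber := sum_sq_sum_fiber_le (fun p : Fin m × Fin m => s(p.1, p.2))
    card_filter_mk_eq_le_two (pairCoeff m i j)
  push_cast at hfiber
  simp only [symCoeff]
  linarith [sum_pairCoeff_sq_le hm i j]

theorem vec_ne_zero (z : Sym2 (Fin m)) : vec m z ≠ 0 := fun h => by
  absurd one_le_sum_vec_sq z
  simp [h]

noncomputable def unitCoeff (m : ℕ) (i j : Fin m) (z : Sym2 (Fin m)) : ℝ :=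
  (∑ s, vec m z s ^ 2) * symCoeff m i j z

theorem sum_unitCoeff_smul (hm : 0 < m) (i j : Fin m) :
    ∑ z, unitCoeff m i j z • unitOuter (vec m z) = single i j 1 + single j i 1 := by
  rw [← sum_symCoeff_smul hm]
  refine sum_congr rfl fun z _ => ?_
  have := (sum_sq_pos_of_ne_zero (vec_ne_zero z)).ne'
  rw [unitCoeff, unitOuter, smul_smul]
  congr 1
  field_simp

theorem sum_unitCoeff_sq_le (hm : 0 < m) (i j : Fin m) : ∑ z, unitCoeff m i j z ^ 2 ≤ 40 ^ 2 :=
  calc ∑ z, unitCoeff m i j z ^ 2 ≤ ∑ z, (16 : ℝ) ^ 2 * symCoeff m i j z ^ 2 :=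
        sum_le_sum fun z _ => by
          rw [unitCoeff, mul_pow]
          gcongr
          exact sum_vec_sq_le hm z
    _ ≤ 40 ^ 2 := by rw [← mul_sum]; linarith [sum_symCoeff_sq_le hm i j]

theorem le_abs_unitOuter_vec (hm : 0 < m) (z : Sym2 (Fin m)) (s s' : Fin m) :
    1 / 4 / (m : ℝ) ^ 7 ≤ |unitOuter (vec m z) s s'| := by
  have hm1 : (1 : ℝ) ≤ m := by exact_mod_cast hm
  have hs := two_div_le_vec z s
  have hs' := two_div_le_vec z s'
  have hN := sum_vec_sq_le hm z
  have hN0 := sum_sq_pos_of_ne_zero (vec_ne_zero z)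
  have h2m : 0 < 2 / (m : ℝ) := by positivity
  have hv := h2m.trans_le hs
  have hv' := h2m.trans_le hs'
  rw [unitOuter_apply, abs_of_pos (div_pos (mul_pos hv hv') hN0)]
  calc 1 / 4 / (m : ℝ) ^ 7 ≤ 1 / 4 / (m : ℝ) ^ 2 := by
        gcongr
        norm_num
    _ = 2 / (m : ℝ) * (2 / m) / 16 := by ring
    _ ≤ vec m z s * vec m z s' / ∑ s, vec m z s ^ 2 := by gcongr

theorem isSymm_mem_span (hm : 0 < m) {S : Matrix (Fin m) (Fin m) ℝ} (hS : S.IsSymm) :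
    S ∈ Submodule.span ℝ (Set.range fun z => unitOuter (vec m z)) := by
  have hsingle : ∀ i j, single i j (1 : ℝ) + single j i 1 ∈
      Submodule.span ℝ (Set.range fun z => unitOuter (vec m z)) := fun i j =>
    sum_unitCoeff_smul hm i j ▸ Submodule.sum_mem _ fun z _ =>
      Submodule.smul_mem _ _ (Submodule.subset_span ⟨z, rfl⟩)
  have h : S = (2 : ℝ)⁻¹ • (S + S) := by rw [← two_smul ℝ S, smul_smul]; norm_num
  rw [h, hS.add_self_eq_sum]
  exact Submodule.smul_mem _ _ (Submodule.sum_mem _ fun i _ => Submodule.sum_mem _ fun j _ =>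
    Submodule.smul_mem _ _ (hsingle i j))

theorem linearIndependent_unitOuter_vec (hm : 0 < m) :
    LinearIndependent ℝ fun z => unitOuter (vec m z) :=
  linearIndependent_of_injective_le_span (symmMatrixOfSym2 (Fin m) ℝ)
    (symmMatrixOfSym2_injective _ _) (by
      rintro _ ⟨φ, rfl⟩
      exact isSymm_mem_span hm (isSymm_symmMatrixOfSym2 φ))

end RankOneBasis

open RankOneBasis in
/-- There are absolute constants `c, C > 0` such that for every `m` there is a basis
of the space of symmetric `m × m` matrices consisting of `m(m+1)/2` rank-one symmetric
matrices of unit Frobenius norm, all of whose entries have absolute value at least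
`c/m⁷`, and such that every `e_i e_jᵀ + e_j e_iᵀ` is a coefficient-vector-norm-`O(1)`
linear combination of the basis. -/
theorem rank_one_symmetric_basis :
    ∃ c C : ℝ, 0 < c ∧ 0 < C ∧ ∀ m : ℕ, 0 < m →
      ∃ M : Fin (m * (m + 1) / 2) → Matrix (Fin m) (Fin m) ℝ,
        (∀ t, (M t).IsSymm) ∧
        LinearIndependent ℝ M ∧
        (∀ S : Matrix (Fin m) (Fin m) ℝ, S.IsSymm → S ∈ Submodule.span ℝ (Set.range M)) ∧
        (∀ t, (M t).rank = 1) ∧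
        (∀ t, Real.sqrt (∑ s, ∑ s', M t s s' ^ 2) = 1) ∧
        (∀ t s s', c / (m : ℝ) ^ 7 ≤ |M t s s'|) ∧
        (∀ i j : Fin m, ∃ lam : Fin (m * (m + 1) / 2) → ℝ,
          (∑ t, lam t • M t) = Matrix.single i j 1 + Matrix.single j i 1 ∧
          Real.sqrt (∑ t, lam t ^ 2) ≤ C) := by
  refine ⟨1 / 4, 40, by norm_num, by norm_num, fun m hm => ?_⟩
  let e : Fin (m * (m + 1) / 2) ≃ Sym2 (Fin m) :=
    (Fintype.equivFinOfCardEq (card_sym2_fin m)).symm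
  refine ⟨fun t => unitOuter (vec m (e t)), fun t => isSymm_unitOuter _,
    (linearIndependent_equiv e).mpr (linearIndependent_unitOuter_vec hm), fun S hS => ?_,
    fun t => rank_unitOuter (vec_ne_zero _),
    fun t => by rw [sum_sum_sq_unitOuter (vec_ne_zero _), Real.sqrt_one],
    fun t => le_abs_unitOuter_vec hm _, fun i j => ⟨fun t => unitCoeff m i j (e t), ?_, ?_⟩⟩
  · have := isSymm_mem_span hm hS
    rwa [← e.surjective.range_comp] at this
  · exact (e.sum_comp fun z => unitCoeff m i j z • unitOuter (vec m z)).trans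
      (sum_unitCoeff_smul hm i j)
  · rw [e.sum_comp fun z => unitCoeff m i j z ^ 2]
    exact Real.sqrt_le_iff.mpr ⟨by norm_num, sum_unitCoeff_sq_le hm i j⟩
end
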